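/- arXiv:2604.20189 — 3 statements merged into one kernel-verified Lean document; each statement's English description precedes it below -/
import Mathlib

section
/- Assume a₁ = 1, a₂ = 2, …, a_p = p and a_{p+1} ≥ p + 2 for some 1 ≤ p ≤ k − 1, and let λ := a_{p+1} − p − 1 (the first non-zero gap). Then reg ≥ ⌈λ/p⌉ + 1 = ⌊(λ−1)/p⌋ + 2. -/
/-!
Write `d = a k` and `λ - 1 = p E + R` with `0 ≤ R < p`, so that `⌈λ/p⌉ = E + 1`.
Since `a 1 = 1`, `S₍₁₎ = ℕ`, and since `d, d - 1 ∈ S₍₂₎`, every `n ≥ d²` lies in `S₍₂₎`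
(Chicken McNugget). Hence both sets in the definition of `reg` are bounded above, so `reg` is
their maximum rather than the junk value of `sSup`. Let `U = (E + 1) d - (E + 1) p - 1`. The
first coordinate of `u = ((E+1) p + 1, U)` lies strictly between `(E + 1) a_p` and `a_{p+1}`,
so no sum of `E + 1 = deg u` generators equals `u` and `u ∉ S`. If `U ∈ S₍₂₎`, then
`u ∈ S' ∖ S`; otherwise `(E d - U, U) ∈ T` has degree `E`. Either way `reg ≥ E + 2`.
-/

namespace ProjMonomialCurve

/-- The numerical semigroup generated by `a 1, …, a k` (equivalently by `A₁ = {0,a 1,…,a k}`). -/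
def S1 (k : ℕ) (a : ℕ → ℕ) : Set ℕ :=
  {n | ∃ x : ℕ → ℕ, n = ∑ i ∈ Finset.Icc 1 k, x i * a i}

/-- The numerical semigroup generated by the nonzero elements `d - a i` (`0 ≤ i ≤ k-1`)
of `A₂`, where `d = a k`. -/
def S2 (k : ℕ) (a : ℕ → ℕ) : Set ℕ :=
  {n | ∃ x : ℕ → ℕ, n = ∑ i ∈ Finset.range k, x i * (a k - a i)}

/-- `δ₁ n`: least total number of summands over representations `n = ∑ xᵢ aᵢ`. -/
noncomputable def delta1 (k : ℕ) (a : ℕ → ℕ) (n : ℕ) : ℕ :=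
  sInf {m | ∃ x : ℕ → ℕ, n = ∑ i ∈ Finset.Icc 1 k, x i * a i ∧ m = ∑ i ∈ Finset.Icc 1 k, x i}

/-- `δ₂ n`: least total number of summands over representations of `n` by the
nonzero elements of `A₂`. -/
noncomputable def delta2 (k : ℕ) (a : ℕ → ℕ) (n : ℕ) : ℕ :=
  sInf {m | ∃ x : ℕ → ℕ,
    n = ∑ i ∈ Finset.range k, x i * (a k - a i) ∧ m = ∑ i ∈ Finset.range k, x i}

/-- `ω₁ i`: the least element of `S₍₁₎` congruent to `i` modulo `d = a k`. -/
noncomputable def omega1 (k : ℕ) (a : ℕ → ℕ) (i : ℕ) : ℕ :=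
  sInf {n | n ∈ S1 k a ∧ n % a k = i % a k}

/-- `ω₂ i`: the least element of `S₍₂₎` congruent to `i` modulo `d = a k`. -/
noncomputable def omega2 (k : ℕ) (a : ℕ → ℕ) (i : ℕ) : ℕ :=
  sInf {n | n ∈ S2 k a ∧ n % a k = i % a k}

/-- `w i = (ω₁(i), ω₂(d-i))`. -/
noncomputable def w (k : ℕ) (a : ℕ → ℕ) (i : ℕ) : ℕ × ℕ :=
  (omega1 k a i, omega2 k a (a k - i))

/-- `e h = (h, d - h)`. -/
def e (k : ℕ) (a : ℕ → ℕ) (h : ℕ) : ℕ × ℕ := (h, a k - h)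

/-- The affine semigroup `S ⊆ ℕ²` generated by `e (a 0), …, e (a k)`. -/
def S (k : ℕ) (a : ℕ → ℕ) : Set (ℕ × ℕ) :=
  {u | ∃ x : ℕ → ℕ, u = ∑ i ∈ Finset.range (k+1), x i • e k a (a i)}

/-- `S' = {u ∈ ℕ² | u + p•e₀ ∈ S and u + p•e_d ∈ S for some p ∈ ℕ}`. -/
def S' (k : ℕ) (a : ℕ → ℕ) : Set (ℕ × ℕ) :=
  {u | ∃ p : ℕ, u + p • e k a 0 ∈ S k a ∧ u + p • e k a (a k) ∈ S k a}

/-- `deg u = (u₁ + u₂)/d` for `u ∈ ℕ²`. -/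
def deg (k : ℕ) (a : ℕ → ℕ) (u : ℕ × ℕ) : ℕ := (u.1 + u.2) / a k

/-- The index set `𝕀`. -/
noncomputable def II (k : ℕ) (a : ℕ → ℕ) : Set ℕ :=
  {i | 1 ≤ i ∧ i ≤ a k - 1 ∧ (∀ j, 1 ≤ j → j ≤ k - 1 → i ≠ a j) ∧
    deg k a (w k a i) < delta1 k a (w k a i).1}

/-- `T = {u ∈ ℤ² | d ∣ u₁+u₂, u₁ ∉ S₍₁₎, u₂ ∉ S₍₂₎}`. -/
def T (k : ℕ) (a : ℕ → ℕ) : Set (ℤ × ℤ) :=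
  {u | (a k : ℤ) ∣ u.1 + u.2 ∧ (∀ n ∈ S1 k a, (n : ℤ) ≠ u.1) ∧ (∀ n ∈ S2 k a, (n : ℤ) ≠ u.2)}

/-- `deg` for integer points. -/
def degZ (k : ℕ) (a : ℕ → ℕ) (u : ℤ × ℤ) : ℤ := (u.1 + u.2) / (a k : ℤ)

/-- The Castelnuovo–Mumford regularity, expressed combinatorially:
`max({deg u + 1 : u ∈ S'∖S} ∪ {deg u + 2 : u ∈ T})`. -/
noncomputable def reg (k : ℕ) (a : ℕ → ℕ) : ℤ :=
  sSup ({z : ℤ | ∃ u ∈ S' k a \ S k a, z = (deg k a u : ℤ) + 1} ∪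
        {z : ℤ | ∃ u ∈ T k a, z = degZ k a u + 2})

/-- Frobenius number of `S₍₁₎` (greatest integer not in it; `-1` if the semigroup is all of `ℕ`). -/
noncomputable def F1 (k : ℕ) (a : ℕ → ℕ) : ℤ :=
  sSup {z : ℤ | ∀ n ∈ S1 k a, (n : ℤ) ≠ z}

/-- Frobenius number of `S₍₂₎`. -/
noncomputable def F2 (k : ℕ) (a : ℕ → ℕ) : ℤ :=
  sSup {z : ℤ | ∀ n ∈ S2 k a, (n : ℤ) ≠ z}

/-- The largest gap `λ_max = max_{1 ≤ i ≤ k} (a i - a (i-1) - 1)`. -/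
def lamMax (k : ℕ) (a : ℕ → ℕ) : ℕ :=
  (Finset.Icc 1 k).sup (fun i => a i - a (i-1) - 1)

/-- The second largest gap: the minimum over `i` of the largest gap among indices `≠ i`. -/
noncomputable def lamSl (k : ℕ) (a : ℕ → ℕ) : ℕ :=
  sInf {m | ∃ i, 1 ≤ i ∧ i ≤ k ∧
    m = ((Finset.Icc 1 k).erase i).sup (fun j => a j - a (j-1) - 1)}

/-- The set `A₁ = {a 0, a 1, …, a k}`. -/
def A1set (k : ℕ) (a : ℕ → ℕ) : Set ℕ := {m | ∃ j ≤ k, a j = m}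

def addSubmonoidS (k : ℕ) (a : ℕ → ℕ) : AddSubmonoid (ℕ × ℕ) where
  carrier := S k a
  add_mem' := by
    rintro _ _ ⟨x, rfl⟩ ⟨y, rfl⟩
    exact ⟨x + y, by simp [add_smul, Finset.sum_add_distrib]⟩
  zero_mem' := ⟨0, by simp⟩

def addSubmonoidS2 (k : ℕ) (a : ℕ → ℕ) : AddSubmonoid ℕ where
  carrier := S2 k a
  add_mem' := by
    rintro _ _ ⟨x, rfl⟩ ⟨y, rfl⟩
    exact ⟨x + y, by simp [add_mul, Finset.sum_add_distrib]⟩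
  zero_mem' := ⟨0, by simp⟩

section

variable {k : ℕ} {a : ℕ → ℕ}

@[simp] lemma mem_addSubmonoidS2 {n : ℕ} : n ∈ addSubmonoidS2 k a ↔ n ∈ S2 k a := Iff.rfl

lemma add_mem_S {u v : ℕ × ℕ} (hu : u ∈ S k a) (hv : v ∈ S k a) : u + v ∈ S k a :=
  (addSubmonoidS k a).add_mem hu hv

lemma nsmul_mem_S {u : ℕ × ℕ} (hu : u ∈ S k a) (n : ℕ) : n • u ∈ S k a :=
  (addSubmonoidS k a).nsmul_mem hu n

lemma e_mem_S {i : ℕ} (hi : i ≤ k) : e k a (a i) ∈ S k a :=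
  ⟨Pi.single i 1, by simp [Pi.single_apply, Nat.lt_succ_iff.mpr hi]⟩

lemma sub_mem_S2 {i : ℕ} (hi : i < k) : a k - a i ∈ S2 k a :=
  ⟨Pi.single i 1, by simp [Pi.single_apply, hi]⟩

lemma sum_smul_e_mem_S (s : Finset ℕ) (hs : ∀ i ∈ s, i ≤ k) (x : ℕ → ℕ) :
    ∑ i ∈ s, x i • e k a (a i) ∈ S k a :=
  (addSubmonoidS k a).sum_mem fun i hi => nsmul_mem_S (e_mem_S (hs i hi)) _

lemma fst_add_snd_sum_smul_e (s : Finset ℕ) (x h : ℕ → ℕ) (hh : ∀ i ∈ s, h i ≤ a k) :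
    (∑ i ∈ s, x i • e k a (h i)).1 + (∑ i ∈ s, x i • e k a (h i)).2 =
      (∑ i ∈ s, x i) * a k := by
  rw [Prod.fst_sum, Prod.snd_sum, ← Finset.sum_add_distrib, Finset.sum_mul]
  refine Finset.sum_congr rfl fun i hi => ?_
  simp only [e, Prod.smul_mk, smul_eq_mul, ← mul_add, Nat.add_sub_cancel' (hh i hi)]

lemma mem_S1_of_a_one (ha1 : a 1 = 1) (hk : 1 ≤ k) (n : ℕ) : n ∈ S1 k a :=
  ⟨Pi.single 1 n, by simp [Pi.single_apply, ha1, hk]⟩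

lemma mem_S2_of_sq_le (ha0 : a 0 = 0) (ha1 : a 1 = 1) (hk : 1 < k) (hd : 3 ≤ a k) {n : ℕ}
    (hn : a k * a k ≤ n) : n ∈ S2 k a := by
  have hcop : Nat.Coprime (a k) (a k - 1) :=
    (Nat.coprime_self_sub_right (by omega)).mpr (Nat.coprime_one_right _)
  have hfrob := frobeniusNumber_iff.mp (frobeniusNumber_pair hcop (by omega) (by omega))
  have hle : AddSubmonoid.closure {a k, a k - 1} ≤ addSubmonoidS2 k a := by
    rw [AddSubmonoid.closure_le, Set.insert_subset_iff, Set.singleton_subset_iff]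
    exact ⟨by simpa [ha0] using sub_mem_S2 (a := a) (by omega : 0 < k),
      by simpa [ha1] using sub_mem_S2 (a := a) hk⟩
  have hlt : a k * (a k - 1) < a k * a k := Nat.mul_lt_mul_of_pos_left (by omega) (by omega)
  exact hle (hfrob.2 n (by omega))

lemma mem_S'_of_mem_S1_of_mem_S2 (ha0 : a 0 = 0) (ha : MonotoneOn a (Set.Iic k))
    {u : ℕ × ℕ} (hdvd : a k ∣ u.1 + u.2) (h1 : u.1 ∈ S1 k a) (h2 : u.2 ∈ S2 k a) :
    u ∈ S' k a := by
  obtain ⟨m, hm⟩ := hdvd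
  obtain ⟨x, hx⟩ := h1
  obtain ⟨y, hy⟩ := h2
  have hX := fst_add_snd_sum_smul_e (Finset.Icc 1 k) x a
    fun i hi => ha (Finset.mem_Icc.mp hi).2 (le_refl k) (Finset.mem_Icc.mp hi).2
  have hY := fst_add_snd_sum_smul_e (Finset.range k) y a
    fun i hi => ha (Finset.mem_range.mp hi).le (le_refl k) (Finset.mem_range.mp hi).le
  simp only [Prod.fst_sum, Prod.snd_sum, e, Prod.smul_mk, smul_eq_mul] at hX hY
  set X := ∑ i ∈ Finset.Icc 1 k, x i
  set Y := ∑ i ∈ Finset.range k, y i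
  refine ⟨X + Y, ?_, ?_⟩
  · have hsum : u + (X + Y) • e k a 0 =
        ∑ i ∈ Finset.Icc 1 k, x i • e k a (a i) + (m + Y) • e k a (a 0) := by
      ext <;> simp only [Prod.fst_add, Prod.snd_add, Prod.fst_sum, Prod.snd_sum, e, ha0,
        Prod.smul_mk, smul_eq_mul, Nat.sub_zero] <;> linarith
    rw [hsum]
    exact add_mem_S (sum_smul_e_mem_S _ (fun i hi => (Finset.mem_Icc.mp hi).2) x)
      (nsmul_mem_S (e_mem_S (Nat.zero_le k)) _)
  · have hsum : u + (X + Y) • e k a (a k) =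
        ∑ i ∈ Finset.range k, y i • e k a (a i) + (m + X) • e k a (a k) := by
      ext <;> simp only [Prod.fst_add, Prod.snd_add, Prod.fst_sum, Prod.snd_sum, e,
        Prod.smul_mk, smul_eq_mul, Nat.sub_self] <;> linarith
    rw [hsum]
    exact add_mem_S (sum_smul_e_mem_S _ (fun i hi => (Finset.mem_range.mp hi).le) y)
      (nsmul_mem_S (e_mem_S le_rfl) _)

lemma mem_S_of_snd_eq_sum (ha : MonotoneOn a (Set.Iic k)) {u : ℕ × ℕ} {m : ℕ}
    (hm : u.1 + u.2 = m * a k) (y : ℕ → ℕ)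
    (hy : u.2 = ∑ i ∈ Finset.range k, y i * (a k - a i))
    (hym : ∑ i ∈ Finset.range k, y i ≤ m) : u ∈ S k a := by
  obtain ⟨c, rfl⟩ : ∃ c, m = ∑ i ∈ Finset.range k, y i + c :=
    ⟨_, (Nat.add_sub_cancel' hym).symm⟩
  have hY := fst_add_snd_sum_smul_e (Finset.range k) y a
    fun i hi => ha (Finset.mem_range.mp hi).le (le_refl k) (Finset.mem_range.mp hi).le
  simp only [Prod.fst_sum, Prod.snd_sum, e, Prod.smul_mk, smul_eq_mul] at hY
  have hu : u = ∑ i ∈ Finset.range k, y i • e k a (a i) + c • e k a (a k) := by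
    ext <;> simp only [Prod.fst_add, Prod.snd_add, Prod.fst_sum, Prod.snd_sum, e,
      Prod.smul_mk, smul_eq_mul, Nat.sub_self] <;> linarith
  rw [hu]
  exact add_mem_S (sum_smul_e_mem_S _ (fun i hi => (Finset.mem_range.mp hi).le) y)
    (nsmul_mem_S (e_mem_S le_rfl) _)

lemma mem_S_of_sq_le_snd (ha0 : a 0 = 0) (ha1 : a 1 = 1) (hk : 1 ≤ k) (hd : 0 < a k)
    {u : ℕ × ℕ} {m : ℕ} (hm : u.1 + u.2 = m * a k) (hu2 : a k * a k ≤ u.2) :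
    u ∈ S k a := by
  have hdiv := Nat.div_add_mod u.1 (a k)
  have hr : a k * (u.1 % a k) < a k * a k := Nat.mul_lt_mul_of_pos_left (Nat.mod_lt _ hd) hd
  have hr' : u.1 % a k * (a k - 1) + u.1 % a k = u.1 % a k * a k := by
    rw [← Nat.mul_add_one, Nat.sub_add_cancel hd]
  obtain ⟨c, hc⟩ : ∃ c, m = u.1 / a k + u.1 % a k + c := by
    refine ⟨m - (u.1 / a k + u.1 % a k), (Nat.add_sub_cancel' ?_).symm⟩
    refine (Nat.lt_of_mul_lt_mul_left (a := a k) ?_).le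
    rw [Nat.mul_add]
    linarith [mul_comm m (a k), Nat.zero_le (u.1 % a k)]
  have hu : u = (u.1 / a k) • e k a (a k) + (u.1 % a k) • e k a (a 1) + c • e k a (a 0) := by
    subst hc
    ext <;> simp only [Prod.fst_add, Prod.snd_add, e, ha0, ha1, Prod.smul_mk, smul_eq_mul,
      Nat.sub_self, Nat.sub_zero] <;> linarith
  rw [hu]
  exact add_mem_S (add_mem_S (nsmul_mem_S (e_mem_S le_rfl) _) (nsmul_mem_S (e_mem_S hk) _))
    (nsmul_mem_S (e_mem_S (Nat.zero_le k)) _)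

lemma deg_lt_of_mem_S'_of_notMem_S (ha0 : a 0 = 0) (ha1 : a 1 = 1) (hk : 1 ≤ k)
    (ha : StrictMonoOn a (Set.Iic k)) {u : ℕ × ℕ} (hu : u ∈ S' k a) (hnu : u ∉ S k a) :
    deg k a u < a k * a k := by
  have hd : 0 < a k := ha0 ▸ ha (Nat.zero_le k) (le_refl k) (by omega)
  obtain ⟨P, -, y, hy⟩ := hu
  have hsum := fst_add_snd_sum_smul_e (Finset.range (k + 1)) y a fun i hi =>
    ha.monotoneOn (Finset.mem_range_succ_iff.mp hi) (le_refl k) (Finset.mem_range_succ_iff.mp hi)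
  rw [← hy] at hsum
  simp only [e, Prod.fst_add, Prod.snd_add, Prod.smul_mk, smul_eq_mul, Nat.sub_self] at hsum
  have hy2 : u.2 = ∑ i ∈ Finset.range k, y i * (a k - a i) := by
    simpa [e, Prod.snd_sum, Finset.sum_range_succ] using congrArg Prod.snd hy
  have hm : u.1 + u.2 = deg k a u * a k := by
    refine (Nat.div_mul_cancel ((Nat.dvd_add_right (dvd_mul_left (a k) P)).mp ?_)).symm
    exact ⟨∑ i ∈ Finset.range (k + 1), y i, by linarith [mul_comm P (a k)]⟩
  have hyu : ∑ i ∈ Finset.range k, y i ≤ u.2 := hy2 ▸ Finset.sum_le_sum fun i hi =>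
    Nat.le_mul_of_pos_right _ <| Nat.sub_pos_of_lt <|
      ha (Finset.mem_range.mp hi).le (le_refl k) (Finset.mem_range.mp hi)
  have hmy : deg k a u < ∑ i ∈ Finset.range k, y i :=
    not_le.mp fun h => hnu (mem_S_of_snd_eq_sum ha.monotoneOn hm y hy2 h)
  have hu2 : u.2 < a k * a k := not_le.mp fun h => hnu (mem_S_of_sq_le_snd ha0 ha1 hk hd hm h)
  omega

lemma degZ_lt_of_mem_T (ha0 : a 0 = 0) (ha1 : a 1 = 1) (hk : 1 < k) (hd : 3 ≤ a k)
    {u : ℤ × ℤ} (hu : u ∈ T k a) : degZ k a u < a k := by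
  obtain ⟨-, hu1, hu2⟩ := hu
  have h1 : u.1 < 0 := not_le.mp fun h =>
    hu1 u.1.toNat (mem_S1_of_a_one ha1 hk.le _) (Int.toNat_of_nonneg h)
  have h2 : u.2 < a k * a k := not_le.mp fun h =>
    have h0 : (0 : ℤ) ≤ u.2 := (by positivity : (0 : ℤ) ≤ a k * a k).trans h
    hu2 u.2.toNat (mem_S2_of_sq_le ha0 ha1 hk hd (by omega)) (Int.toNat_of_nonneg h0)
  exact Int.ediv_lt_of_lt_mul (by omega) (by linarith)

lemma bddAbove_reg_set (ha0 : a 0 = 0) (ha1 : a 1 = 1) (hk : 1 < k) (hd : 3 ≤ a k)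
    (ha : StrictMonoOn a (Set.Iic k)) :
    BddAbove ({z : ℤ | ∃ u ∈ S' k a \ S k a, z = (deg k a u : ℤ) + 1} ∪
        {z : ℤ | ∃ u ∈ T k a, z = degZ k a u + 2}) := by
  refine ⟨a k * a k + 2, ?_⟩
  rintro z (⟨u, ⟨hu, hnu⟩, rfl⟩ | ⟨u, hu, rfl⟩)
  · have := deg_lt_of_mem_S'_of_notMem_S ha0 ha1 hk.le ha hu hnu
    omega
  · have := degZ_lt_of_mem_T ha0 ha1 hk hd hu
    nlinarith

lemma fst_le_or_le_fst_of_mem_S (ha : MonotoneOn a (Set.Iic k)) (hd : 0 < a k) {p : ℕ}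
    (hp : p + 1 ≤ k) {u : ℕ × ℕ} (hu : u ∈ S k a) {n : ℕ} (hn : u.1 + u.2 = n * a k) :
    u.1 ≤ n * a p ∨ a (p + 1) ≤ u.1 := by
  obtain ⟨x, rfl⟩ := hu
  have hmem : ∀ {i}, i ∈ Finset.range (k + 1) → i ≤ k := Finset.mem_range_succ_iff.mp
  have hx : ∑ i ∈ Finset.range (k + 1), x i = n := Nat.eq_of_mul_eq_mul_right hd <|
    (fst_add_snd_sum_smul_e _ x a fun i hi => ha (hmem hi) (le_refl k) (hmem hi)).symm.trans hn
  simp only [Prod.fst_sum, e, Prod.smul_mk, smul_eq_mul]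
  by_cases h : ∃ j ∈ Finset.range (k + 1), p < j ∧ x j ≠ 0
  · obtain ⟨j, hj, hpj, hxj⟩ := h
    right
    calc a (p + 1) ≤ a j := ha hp (hmem hj) hpj
      _ ≤ x j * a j := Nat.le_mul_of_pos_left _ (Nat.pos_of_ne_zero hxj)
      _ ≤ ∑ i ∈ Finset.range (k + 1), x i * a i :=
        Finset.single_le_sum (f := fun i => x i * a i) (fun i _ => Nat.zero_le _) hj
  · push Not at h
    left
    rw [← hx, Finset.sum_mul]
    refine Finset.sum_le_sum fun i hi => ?_
    rcases le_or_gt i p with hip | hip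
    · exact Nat.mul_le_mul_left _ (ha (hmem hi) (by omega : p ≤ k) hip)
    · simp [h i hi hip]

lemma mem_S'_diff_S_of_gap (ha : StrictMonoOn a (Set.Iic k)) (ha0 : a 0 = 0) (ha1 : a 1 = 1)
    {p : ℕ} (hp : p + 1 ≤ k) {E n U : ℕ} (hn : (E + 1) * a p < n) (hn' : n < a (p + 1))
    (hnU : n + U = (E + 1) * a k) (hU : U ∈ S2 k a) : (n, U) ∈ S' k a \ S k a := by
  have hd : 0 < a k := ha0 ▸ ha (Nat.zero_le k) (le_refl k) (by omega)
  refine ⟨mem_S'_of_mem_S1_of_mem_S2 ha0 ha.monotoneOn ⟨E + 1, by rw [hnU, mul_comm]⟩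
    (mem_S1_of_a_one ha1 (by omega) n) hU, fun h => ?_⟩
  rcases fst_le_or_le_fst_of_mem_S ha.monotoneOn hd hp h hnU with h | h <;> omega

lemma add_two_le_reg (ha : StrictMonoOn a (Set.Iic k)) (ha0 : a 0 = 0) (ha1 : a 1 = 1)
    {p : ℕ} (hp : p + 1 ≤ k) {E : ℕ} (hE : (E + 1) * a p + 2 ≤ a (p + 1)) :
    (E : ℤ) + 2 ≤ reg k a := by
  have hp0 : 1 ≤ p := by
    rcases p with _ | p
    · simp [ha0, ha1] at hE
    · omega
  have hapd : a (p + 1) ≤ a k := ha.monotoneOn hp (le_refl k) hp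
  have hap : a 1 ≤ a p := ha.monotoneOn (by omega : 1 ≤ k) (by omega : p ≤ k) hp0
  have hapE : a p ≤ (E + 1) * a p := Nat.le_mul_of_pos_left _ (Nat.succ_pos E)
  have hd : 3 ≤ a k := by omega
  have hbdd := bddAbove_reg_set ha0 ha1 (by omega) hd ha
  have hdE : (E + 1) * a k = E * a k + a k := Nat.succ_mul E (a k)
  obtain ⟨U, hU⟩ : ∃ U, (E + 1) * a p + 1 + U = (E + 1) * a k :=
    ⟨_, Nat.add_sub_cancel' (by omega)⟩
  by_cases hU2 : U ∈ S2 k a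
  · have hu := mem_S'_diff_S_of_gap ha ha0 ha1 hp (by omega) (by omega) hU hU2
    have hdeg : deg k a ((E + 1) * a p + 1, U) = E + 1 := by
      simp only [deg, hU, Nat.mul_div_cancel _ (by omega : 0 < a k)]
    calc (E : ℤ) + 2 = (deg k a ((E + 1) * a p + 1, U) : ℤ) + 1 := by
          rw [hdeg]; push_cast; ring
      _ ≤ reg k a := le_csSup hbdd (Or.inl ⟨_, hu, rfl⟩)
  · have hUE : (E : ℤ) * a k < U := by exact_mod_cast (by omega : E * a k < U)
    have hv : ((E : ℤ) * a k - U, (U : ℤ)) ∈ T k a :=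
      ⟨⟨E, by ring⟩, fun n _ h => by omega, fun n hn h => hU2 (Nat.cast_injective h ▸ hn)⟩
    calc (E : ℤ) + 2 = degZ k a ((E : ℤ) * a k - U, (U : ℤ)) + 2 := by
          simp only [degZ, sub_add_cancel, Int.mul_ediv_cancel _ (by omega : (a k : ℤ) ≠ 0)]
      _ ≤ reg k a := le_csSup hbdd (Or.inr ⟨_, hv, rfl⟩)

end

lemma ceil_intCast_div_eq_floor_sub_one_div_add_one (n : ℤ) {p : ℕ} (hp : 0 < p) :
    ⌈(n : ℚ) / p⌉ = ⌊((n : ℚ) - 1) / p⌋ + 1 := by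
  rw [Rat.ceil_intCast_div_natCast, ← Int.cast_one, ← Int.cast_sub,
    Rat.floor_intCast_div_natCast]
  have hp' : (0 : ℤ) < p := by exact_mod_cast hp
  have h := Int.emod_add_mul_ediv (n - 1) p
  have h0 := Int.emod_nonneg (n - 1) hp'.ne'
  have h1 := Int.emod_lt_of_pos (n - 1) hp'
  have : (-n) / p = -((n - 1) / p) - 1 :=
    ((Int.ediv_emod_unique (r := p - 1 - (n - 1) % p) hp').mpr
      ⟨by linear_combination -h, by omega, by omega⟩).1
  omega

theorem statement_14_general (k : ℕ) (a : ℕ → ℕ) (ha0 : a 0 = 0)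
    (hmono : ∀ i, i < k → a i < a (i+1))
    (p : ℕ) (hp1 : 1 ≤ p) (hpk : p ≤ k - 1)
    (hap : ∀ i, 1 ≤ i → i ≤ p → a i = i) (hap1 : p + 2 ≤ a (p+1)) :
    reg k a ≥ ⌈((a (p+1) - p - 1 : ℕ) : ℚ) / (p : ℚ)⌉ + 1 ∧
    ⌈((a (p+1) - p - 1 : ℕ) : ℚ) / (p : ℚ)⌉ + 1 =
      ⌊(((a (p+1) - p - 1 : ℕ) : ℚ) - 1) / (p : ℚ)⌋ + 2 := by
  have hceil := ceil_intCast_div_eq_floor_sub_one_div_add_one (a (p+1) - p - 1 : ℕ) hp1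
  rw [Int.cast_natCast] at hceil
  refine ⟨?_, by rw [hceil]; ring⟩
  obtain ⟨l, hl⟩ : ∃ l, a (p + 1) = l + p + 2 := ⟨a (p + 1) - p - 2, by omega⟩
  have hfloor : ⌊(((a (p+1) - p - 1 : ℕ) : ℚ) - 1) / p⌋ = (l / p : ℕ) := by
    rw [show a (p + 1) - p - 1 = l + 1 by omega, Nat.cast_succ, add_sub_cancel_right,
      Rat.floor_natCast_div_natCast, Int.natCast_div]
  have hE : (l / p + 1) * a p + 2 ≤ a (p + 1) := by
    rw [hap p hp1 le_rfl, Nat.succ_mul]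
    have := Nat.div_mul_le_self l p
    omega
  rw [ge_iff_le, hceil, hfloor, add_assoc]
  exact add_two_le_reg (strictMonoOn_Iic_of_lt_succ hmono) ha0 (hap 1 le_rfl hp1) (by omega) hE

theorem statement_14 (k : ℕ) (a : ℕ → ℕ) (hk : 3 ≤ k) (ha0 : a 0 = 0)
    (hmono : ∀ i, i < k → a i < a (i+1)) (hgcd : (Finset.Icc 1 k).gcd a = 1)
    (p : ℕ) (hp1 : 1 ≤ p) (hpk : p ≤ k - 1)
    (hap : ∀ i, 1 ≤ i → i ≤ p → a i = i) (hap1 : p + 2 ≤ a (p+1)) :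
    reg k a ≥ ⌈((a (p+1) - p - 1 : ℕ) : ℚ) / (p : ℚ)⌉ + 1 ∧
    ⌈((a (p+1) - p - 1 : ℕ) : ℚ) / (p : ℚ)⌉ + 1 =
      ⌊(((a (p+1) - p - 1 : ℕ) : ℚ) - 1) / (p : ℚ)⌋ + 2 :=
  statement_14_general k a ha0 hmono p hp1 hpk hap hap1

end ProjMonomialCurve
end

section
/- Write {a₀, a₁, …, a_k} = ⋃_{j=0}^r [b_{2j}, b_{2j+1}] as a disjoint union of intervals of consecutive integers, where 0 = b₀ ≤ b₁ < b₂ ≤ b₃ < ⋯ < b_{2r} ≤ b_{2r+1} = d and b_{2j−1} + 2 ≤ b_{2j} for j = 1,…,r. Assume r ≥ 2, b₁ = 0, b_{2r} < d and b₅ − b₄ + 1 ≥ b₂. Then reg ≤ 2 + max{⌊λ_sl/(d−b_{2r})⌋ + ⌊λ_max/b₂⌋, ⌊λ_max/(d−b_{2r})⌋ + ⌊λ_sl/b₂⌋}. -/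
namespace ProjMonomialCurve

section Proof

variable {k r : ℕ} {a b : ℕ → ℕ}

def Rep (k : ℕ) (a : ℕ → ℕ) (m s : ℕ) : Prop :=
  ∃ x : ℕ → ℕ, s = ∑ i ∈ Finset.Icc 1 k, x i * a i ∧ ∑ i ∈ Finset.Icc 1 k, x i ≤ m

theorem rep_zero {k : ℕ} {a : ℕ → ℕ} : Rep k a 0 0 := ⟨fun _ => 0, by simp, by simp⟩

theorem rep_mono {k m m' s : ℕ} {a : ℕ → ℕ} (hm : m ≤ m') (h : Rep k a m s) :
    Rep k a m' s := by
  obtain ⟨x, h1, h2⟩ := h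
  exact ⟨x, h1, le_trans h2 hm⟩

theorem rep_add {k m1 m2 s1 s2 : ℕ} {a : ℕ → ℕ} (h1 : Rep k a m1 s1) (h2 : Rep k a m2 s2) :
    Rep k a (m1 + m2) (s1 + s2) := by
  obtain ⟨x, hx1, hx2⟩ := h1
  obtain ⟨y, hy1, hy2⟩ := h2
  refine ⟨fun i => x i + y i, ?_, ?_⟩
  · rw [hx1, hy1, ← Finset.sum_add_distrib]
    exact Finset.sum_congr rfl (fun i _ => by ring)
  · rw [Finset.sum_add_distrib]
    omega

theorem rep_S1 {k m s : ℕ} {a : ℕ → ℕ} (h : Rep k a m s) : s ∈ S1 k a := by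
  obtain ⟨x, h1, _⟩ := h
  exact ⟨x, h1⟩


theorem chain_beta {β C x y z : ℕ} (hb : 1 ≤ β) (hxy : x + β ≤ y + 1) (h1 : x ≤ z)
    (h2 : z ≤ C * β + y) :
    ∃ c z', c ≤ C ∧ x ≤ z' ∧ z' ≤ y ∧ z = c * β + z' := by
  rcases le_or_gt C ((z - x)/β) with hm | hm
  · have f1 : (z-x)/β * β ≤ z - x := Nat.div_mul_le_self _ _
    have f2 : C * β ≤ (z-x)/β * β := Nat.mul_le_mul_right β hm
    exact ⟨C, z - C*β, le_rfl, by omega, by omega, by omega⟩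
  · have f1 := Nat.div_add_mod (z - x) β
    have f2 := Nat.mod_lt (z - x) (show 0 < β by omega)
    have f3 : (z-x)/β * β = β * ((z-x)/β) := Nat.mul_comm _ _
    exact ⟨(z-x)/β, z - (z-x)/β * β, le_of_lt hm, by omega, by omega, by omega⟩

theorem split_two {x1 y1 x2 y2 z : ℕ} (h1 : x1 ≤ y1) (h2 : x2 ≤ y2) (hz1 : x1 + x2 ≤ z)
    (hz2 : z ≤ y1 + y2) :
    ∃ u v, x1 ≤ u ∧ u ≤ y1 ∧ x2 ≤ v ∧ v ≤ y2 ∧ z = u + v :=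
  ⟨min y1 (z - x2), z - min y1 (z - x2), by omega, by omega, by omega, by omega, by omega⟩

/-- The bound appearing in the theorem. -/
noncomputable def Mx (k r : ℕ) (a b : ℕ → ℕ) : ℕ :=
  max (lamSl k a / (a k - b (2*r)) + lamMax k a / b 2)
      (lamMax k a / (a k - b (2*r)) + lamSl k a / b 2)

structure Hyp (k r : ℕ) (a b : ℕ → ℕ) : Prop where
  hk : 3 ≤ k
  ha0 : a 0 = 0
  hmono : ∀ i, i < k → a i < a (i+1)
  hr : 2 ≤ r
  hb0 : b 0 = 0
  hbtop : b (2*r+1) = a k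
  hble : ∀ j ≤ r, b (2*j) ≤ b (2*j+1)
  hblt : ∀ j, j < r → b (2*j+1) < b (2*j+2)
  hgap2 : ∀ j, 1 ≤ j → j ≤ r → b (2*j-1) + 2 ≤ b (2*j)
  hdecomp : A1set k a = ⋃ j ∈ Set.Iic r, Set.Icc (b (2*j)) (b (2*j+1))
  hb1 : b 1 = 0
  hb2r : b (2*r) < a k
  hb5 : b 2 ≤ b 5 - b 4 + 1

namespace Hyp

variable (h : Hyp k r a b)
include h

theorem ale {i j : ℕ} (hij : i ≤ j) (hj : j ≤ k) : a i ≤ a j := by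
  induction hij with
  | refl => exact le_rfl
  | @step m hm ih =>
      exact le_trans (ih (by omega)) (le_of_lt (h.hmono m (by omega)))

theorem alt {i j : ℕ} (hij : i < j) (hj : j ≤ k) : a i < a j :=
  lt_of_lt_of_le (h.hmono i (by omega)) (h.ale hij hj)

theorem ble {i j : ℕ} (hij : i ≤ j) (hj : j ≤ 2*r+1) : b i ≤ b j := by
  induction hij with
  | refl => exact le_rfl
  | @step m hm ih =>
      refine le_trans (ih (by omega)) ?_
      rcases Nat.even_or_odd m with ⟨t, ht⟩ | ⟨t, ht⟩
      · have h1 : t ≤ r := by omega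
        have := h.hble t h1
        have e1 : b m = b (2*t) := congrArg b (by omega)
        have e2 : b (Nat.succ m) = b (2*t+1) := congrArg b (by omega)
        omega
      · have h1 : t < r := by omega
        have := h.hblt t h1
        have e1 : b m = b (2*t+1) := congrArg b (by omega)
        have e2 : b (Nat.succ m) = b (2*t+2) := congrArg b (by omega)
        omega

theorem memA {j v : ℕ} (hj : j ≤ r) (h1 : b (2*j) ≤ v) (h2 : v ≤ b (2*j+1)) :
    ∃ i, i ≤ k ∧ a i = v := by
  have hv : v ∈ A1set k a := by
    rw [h.hdecomp]
    exact Set.mem_biUnion (Set.mem_Iic.2 hj) ⟨h1, h2⟩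
  obtain ⟨i, hik, hai⟩ := hv
  exact ⟨i, hik, hai⟩

theorem interval_of_mem {i : ℕ} (hi : i ≤ k) :
    ∃ j, j ≤ r ∧ b (2*j) ≤ a i ∧ a i ≤ b (2*j+1) := by
  have hv : a i ∈ A1set k a := ⟨i, hi, rfl⟩
  rw [h.hdecomp] at hv
  simp only [Set.mem_iUnion, Set.mem_Icc, Set.mem_Iic] at hv
  obtain ⟨j, hj, h1, h2⟩ := hv
  exact ⟨j, hj, h1, h2⟩

theorem dpos : 0 < a k := by
  have hk := h.hk
  have := h.alt (show (0:ℕ) < k by omega) le_rfl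
  omega

theorem hb2 : 2 ≤ b 2 := by have := h.hgap2 1 le_rfl (by have := h.hr; omega); simpa [h.hb1] using this

theorem hb23 : b 2 ≤ b 3 := h.hble 1 (by have := h.hr; omega)

theorem hb34 : b 3 + 2 ≤ b 4 := by have := h.hgap2 2 (by omega) h.hr; simpa using this

theorem hb45 : b 4 ≤ b 5 := h.hble 2 h.hr

theorem hb4le : b 4 ≤ b (2*r) := h.ble (by have := h.hr; omega) (by omega)

theorem hqd : b (2*r) + (a k - b (2*r)) = a k := by
  have := h.hb2r; omega

theorem hq1 : 1 ≤ a k - b (2*r) := by have := h.hb2r; omega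

theorem ha1 : a 1 = b 2 := by
  obtain ⟨i, hik, hai⟩ := h.memA (j := 1) (v := b 2) (show 1 ≤ r by have := h.hr; omega) (by norm_num) (by simpa using h.hb23)
  have hb2' := h.hb2
  have hi1 : 1 ≤ i := by
    rcases Nat.eq_zero_or_pos i with h0 | h0
    · rw [h0] at hai; rw [h.ha0] at hai; omega
    · exact h0
  have hle1 : a 1 ≤ b 2 := hai ▸ h.ale hi1 hik
  obtain ⟨j, hjr, hj1, hj2⟩ := h.interval_of_mem (show 1 ≤ k by have := h.hk; omega)
  have ha1pos : 0 < a 1 := by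
    have := h.alt (show (0:ℕ) < 1 by omega) (by have := h.hk; omega); omega
  have hj1' : 1 ≤ j := by
    rcases Nat.eq_zero_or_pos j with h0 | h0
    · exfalso; rw [h0] at hj2; simp [h.hb1] at hj2; omega
    · exact h0
  have : b 2 ≤ b (2*j) := h.ble (by omega) (by omega)
  omega

theorem lam_le {i : ℕ} (h1 : 1 ≤ i) (h2 : i ≤ k) :
    a i ≤ a (i-1) + lamMax k a + 1 := by
  have hmem : i ∈ Finset.Icc 1 k := Finset.mem_Icc.2 ⟨h1, h2⟩
  have hsup : a i - a (i-1) - 1 ≤ lamMax k a := by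
    simpa [lamMax] using Finset.le_sup (f := fun i => a i - a (i-1) - 1) hmem
  have hlt : a (i-1) < a i := by
    have := h.hmono (i-1) (by omega)
    have hi : i - 1 + 1 = i := by omega
    rwa [hi] at this
  omega

theorem next_le {i : ℕ} (hik : i < k) : a (i+1) ≤ a i + lamMax k a + 1 := by
  have := h.lam_le (show 1 ≤ i+1 by omega) (show i+1 ≤ k by omega)
  simpa using this

theorem hL1 : b 2 ≤ lamMax k a + 1 := by
  have := h.lam_le le_rfl (show 1 ≤ k by have := h.hk; omega)
  simp [h.ha0] at this
  have := h.ha1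
  omega

theorem hole2 : b 4 ≤ b 3 + lamMax k a + 1 := by
  obtain ⟨i, hik, hai⟩ := h.memA (j := 1) (v := b 3) (show 1 ≤ r by have := h.hr; omega) (by simpa using h.hb23) (by norm_num)
  have hb34 := h.hb34
  have hik' : i < k := by
    rcases Nat.lt_or_ge i k with h0 | h0
    · exact h0
    · exfalso
      have : i = k := by omega
      rw [this] at hai
      have h1 : b 3 < a k := by
        have := h.hb4le; have := h.hb2r; omega
      omega
  have hnext := h.next_le hik'
  obtain ⟨j, hjr, hj1, hj2⟩ := h.interval_of_mem (show i+1 ≤ k by omega)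
  have hgt : b 3 < a (i+1) := by
    have := h.hmono i hik'; omega
  have hj2' : 2 ≤ j := by
    by_contra hcon
    push_neg at hcon
    interval_cases j
    · rw [h.hb1] at hj2
      have := h.hb2; have := h.hb23
      simp at hj2
      omega
    · simp at hj2; omega
  have : b 4 ≤ b (2*j) := h.ble (by omega) (by omega)
  omega


theorem rep_idx {i : ℕ} (hik : i ≤ k) : Rep k a 1 (a i) := by
  rcases Nat.eq_zero_or_pos i with h0 | h0
  · subst h0
    refine ⟨fun _ => 0, by simp [h.ha0], by simp⟩
  · refine ⟨fun j => if j = i then 1 else 0, ?_, ?_⟩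
    · have hmem : i ∈ Finset.Icc 1 k := Finset.mem_Icc.2 ⟨h0, hik⟩
      simp only [ite_mul, one_mul, zero_mul]
      rw [Finset.sum_ite_eq' (Finset.Icc 1 k) i a, if_pos hmem]
    · have hmem : i ∈ Finset.Icc 1 k := Finset.mem_Icc.2 ⟨h0, hik⟩
      rw [Finset.sum_ite_eq' (Finset.Icc 1 k) i (fun _ => 1), if_pos hmem]

theorem rep_smul {i : ℕ} (hik : i ≤ k) : ∀ c, Rep k a c (c * a i) := by
  intro c
  induction c with
  | zero => simpa using rep_zero
  | succ c ih =>
      have := rep_add ih (h.rep_idx hik)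
      rwa [← Nat.succ_mul] at this

theorem count_le {s : ℕ} (hs : s ∈ S1 k a) : ∃ m, Rep k a m s ∧ m * a 1 ≤ s := by
  obtain ⟨x, hx⟩ := hs
  refine ⟨∑ i ∈ Finset.Icc 1 k, x i, ⟨x, hx, le_rfl⟩, ?_⟩
  rw [Finset.sum_mul, hx]
  refine Finset.sum_le_sum (fun i hi => ?_)
  have hi' := Finset.mem_Icc.1 hi
  exact Nat.mul_le_mul_left (x i) (h.ale hi'.1 hi'.2)

theorem rep_interval {lo hi : ℕ} (hlo : 1 ≤ lo) (hlohi : lo ≤ hi)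
    (hA : ∀ v, lo ≤ v → v ≤ hi → ∃ i, i ≤ k ∧ a i = v) :
    ∀ t s, t * lo ≤ s → s ≤ t * hi → Rep k a t s := by
  intro t
  induction t with
  | zero =>
      intro s h1 h2
      rw [Nat.zero_mul] at h2
      have : s = 0 := by omega
      subst this
      exact rep_zero
  | succ t ih =>
      intro s h1 h2
      rw [Nat.succ_mul] at h1 h2
      have hml : t * lo ≤ t * hi := Nat.mul_le_mul_left t hlohi
      by_cases hc : s ≤ t * lo + hi
      · obtain ⟨i, hik, hai⟩ := hA (s - t*lo) (by omega) (by omega)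
        have hr := rep_add (ih (t*lo) le_rfl hml) (h.rep_idx hik)
        have he : t*lo + a i = s := by omega
        rwa [he] at hr
      · push_neg at hc
        obtain ⟨i, hik, hai⟩ := hA hi hlohi le_rfl
        have hr := rep_add (ih (s - hi) (by omega) (by omega)) (h.rep_idx hik)
        have he : (s - hi) + a i = s := by omega
        rwa [he] at hr

theorem exists_decompA {x y s : ℕ} (hxy : x + lamMax k a ≤ y) (h1 : x ≤ s)
    (h2 : s ≤ a k + y) : ∃ i z, i ≤ k ∧ x ≤ z ∧ z ≤ y ∧ s = a i + z := by
  classical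
  set P := (Finset.range (k+1)).filter (fun i => a i + x ≤ s) with hP
  have h0P : 0 ∈ P := by
    simp only [hP, Finset.mem_filter, Finset.mem_range]
    exact ⟨by omega, by rw [h.ha0]; omega⟩
  have hne : P.Nonempty := ⟨0, h0P⟩
  set i := P.max' hne with hi
  have hiP : i ∈ P := P.max'_mem hne
  simp only [hP, Finset.mem_filter, Finset.mem_range] at hiP
  obtain ⟨hik, hsx⟩ := hiP
  by_cases hc : s ≤ a i + y
  · exact ⟨i, s - a i, by omega, by omega, by omega, by omega⟩
  · exfalso
    push_neg at hc
    have hik' : i < k := by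
      rcases Nat.lt_or_ge i k with h' | h'
      · exact h'
      · exfalso
        have : i = k := by omega
        rw [this] at hc
        omega
    have hnext := h.next_le hik'
    have hmem : i + 1 ∈ P := by
      simp only [hP, Finset.mem_filter, Finset.mem_range]
      exact ⟨by omega, by omega⟩
    have := P.le_max' (i+1) hmem
    omega


theorem cstar_le : lamMax k a / b 2 ≤ Mx k r a b :=
  le_max_of_le_left (Nat.le_add_left _ _)

theorem X1le : lamSl k a / (a k - b (2*r)) + lamMax k a / b 2 ≤ Mx k r a b := le_max_left _ _

theorem Lqle : lamMax k a / (a k - b (2*r)) ≤ Mx k r a b :=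
  le_max_of_le_right (Nat.le_add_right _ _)

theorem key1 : lamMax k a + 1 ≤ (lamMax k a / b 2) * b 2 + b 2 := by
  have hb2 := h.hb2
  have f1 := Nat.div_add_mod (lamMax k a) (b 2)
  have f2 := Nat.mod_lt (lamMax k a) (show 0 < b 2 by omega)
  have f3 : (lamMax k a / b 2) * b 2 = b 2 * (lamMax k a / b 2) := Nat.mul_comm _ _
  omega

theorem key2 : lamMax k a + 1 ≤ (Mx k r a b + 1) * (a k - b (2*r)) := by
  have hq := h.hq1
  have f1 := Nat.div_add_mod (lamMax k a) (a k - b (2*r))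
  have f2 := Nat.mod_lt (lamMax k a) (show 0 < a k - b (2*r) by omega)
  have f4 : lamMax k a / (a k - b (2*r)) + 1 ≤ Mx k r a b + 1 := by
    have := h.Lqle; omega
  have f5 : (lamMax k a / (a k - b (2*r)) + 1) * (a k - b (2*r)) ≤
      (Mx k r a b + 1) * (a k - b (2*r)) := Nat.mul_le_mul_right _ f4
  have f6 : (lamMax k a / (a k - b (2*r)) + 1) * (a k - b (2*r)) =
      (a k - b (2*r)) * (lamMax k a / (a k - b (2*r))) + (a k - b (2*r)) := by ring
  omega

theorem caseLam : b 2 ≤ lamSl k a + 1 ∨ lamMax k a + 1 = b 2 := by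
  by_cases hc : b 2 ≤ lamSl k a + 1
  · exact Or.inl hc
  · right
    push_neg at hc
    have hL1 := h.hL1
    by_contra hne
    have hlt : b 2 ≤ lamMax k a := by omega
    have hne' : (Finset.Icc 1 k).Nonempty := ⟨1, Finset.mem_Icc.2 ⟨le_rfl, by have := h.hk; omega⟩⟩
    obtain ⟨i0, hi0mem, hi0⟩ :=
      Finset.exists_mem_eq_sup (Finset.Icc 1 k) hne' (fun i => a i - a (i-1) - 1)
    have hf1 : a 1 - a (1-1) - 1 = b 2 - 1 := by
      have e : (1:ℕ) - 1 = 0 := rfl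
      rw [e, h.ha0, h.ha1]
      omega
    have hi0ne : i0 ≠ 1 := by
      intro hcon
      rw [hcon] at hi0
      have : lamMax k a = a 1 - a (1-1) - 1 := by rw [lamMax, hi0]
      have := h.hb2
      omega
    have hsl : b 2 - 1 ≤ lamSl k a := by
      apply le_csInf
      · exact ⟨((Finset.Icc 1 k).erase 1).sup (fun j => a j - a (j-1) - 1), 1, le_rfl,
          (by have := h.hk; omega), rfl⟩
      rintro m ⟨i, hi1, hik, rfl⟩
      by_cases hieq : i = 1
      · subst hieq
        have hmem : i0 ∈ (Finset.Icc 1 k).erase 1 := Finset.mem_erase.2 ⟨hi0ne, hi0mem⟩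
        have h5 : a i0 - a (i0-1) - 1 ≤
            ((Finset.Icc 1 k).erase 1).sup (fun j => a j - a (j-1) - 1) :=
          Finset.le_sup (f := fun j => a j - a (j-1) - 1) hmem
        have hlam : lamMax k a = a i0 - a (i0-1) - 1 := by rw [lamMax, hi0]
        omega
      · have hmem : 1 ∈ (Finset.Icc 1 k).erase i :=
          Finset.mem_erase.2 ⟨Ne.symm (by omega), Finset.mem_Icc.2 ⟨le_rfl, by have := h.hk; omega⟩⟩
        have h5 : a 1 - a (1-1) - 1 ≤
            ((Finset.Icc 1 k).erase i).sup (fun j => a j - a (j-1) - 1) :=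
          Finset.le_sup (f := fun j => a j - a (j-1) - 1) hmem
        omega
    have := h.hb2
    omega

theorem T0fact :
    b 2 ≤ (Mx k r a b + 1 - lamMax k a / b 2) * (a k - b (2*r)) + 1 ∧
    lamMax k a + 1 ≤ (lamMax k a / b 2) * b 2 +
      (Mx k r a b + 1 - lamMax k a / b 2) * (a k - b (2*r)) := by
  have hcstM := h.cstar_le
  have hq1 := h.hq1
  have hb2 := h.hb2
  have hX1 := h.X1le
  have hkey1 := h.key1
  have hkey2 := h.key2
  rcases h.caseLam with hcase | hcase
  · have hT0ge : lamSl k a / (a k - b (2*r)) + 1 ≤ Mx k r a b + 1 - lamMax k a / b 2 := by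
      omega
    have hstep : lamSl k a + 1 ≤ (lamSl k a / (a k - b (2*r)) + 1) * (a k - b (2*r)) := by
      have f1 := Nat.div_add_mod (lamSl k a) (a k - b (2*r))
      have f2 := Nat.mod_lt (lamSl k a) (show 0 < a k - b (2*r) by omega)
      have f3 : (lamSl k a / (a k - b (2*r)) + 1) * (a k - b (2*r)) =
          (a k - b (2*r)) * (lamSl k a / (a k - b (2*r))) + (a k - b (2*r)) := by ring
      omega
    have hmul : (lamSl k a / (a k - b (2*r)) + 1) * (a k - b (2*r)) ≤
        (Mx k r a b + 1 - lamMax k a / b 2) * (a k - b (2*r)) :=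
      Nat.mul_le_mul_right _ hT0ge
    constructor <;> omega
  · have hcst0 : lamMax k a / b 2 = 0 := Nat.div_eq_of_lt (by omega)
    have e1 : (Mx k r a b + 1 - lamMax k a / b 2) * (a k - b (2*r)) =
        (Mx k r a b + 1) * (a k - b (2*r)) := by rw [hcst0]; norm_num
    have e2 : (lamMax k a / b 2) * b 2 = 0 := by rw [hcst0, Nat.zero_mul]
    constructor
    · omega
    · omega

theorem interp {t : ℕ} (hT0 : Mx k r a b + 1 - lamMax k a / b 2 ≤ t) (ht : t ≤ Mx k r a b + 1) :
    lamMax k a + 1 ≤ (Mx k r a b + 1 - t) * b 2 + t * (a k - b (2*r)) := by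
  have hcstM := h.cstar_le
  obtain ⟨hf1, hf2⟩ := h.T0fact
  have hkey2 := h.key2
  rcases le_or_gt (b 2) (a k - b (2*r)) with hqb | hqb
  · have e1 : (Mx k r a b + 1 - t) * b 2 + (t - (Mx k r a b + 1 - lamMax k a / b 2)) * b 2 =
        (lamMax k a / b 2) * b 2 := by
      rw [← Nat.add_mul]
      congr 1
      omega
    have e2 : (t - (Mx k r a b + 1 - lamMax k a / b 2)) * b 2 ≤
        (t - (Mx k r a b + 1 - lamMax k a / b 2)) * (a k - b (2*r)) :=
      Nat.mul_le_mul_left _ hqb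
    have e3 : (Mx k r a b + 1 - lamMax k a / b 2) * (a k - b (2*r)) +
        (t - (Mx k r a b + 1 - lamMax k a / b 2)) * (a k - b (2*r)) = t * (a k - b (2*r)) := by
      rw [← Nat.add_mul]
      congr 1
      omega
    omega
  · have e1 : (Mx k r a b + 1 - t) * (a k - b (2*r)) ≤ (Mx k r a b + 1 - t) * b 2 :=
      Nat.mul_le_mul_left _ (le_of_lt hqb)
    have e2 : (Mx k r a b + 1 - t) * (a k - b (2*r)) + t * (a k - b (2*r)) =
        (Mx k r a b + 1) * (a k - b (2*r)) := by
      rw [← Nat.add_mul]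
      congr 1
      omega
    omega

theorem topA : ∀ v, b (2*r) ≤ v → v ≤ a k → ∃ i, i ≤ k ∧ a i = v := fun v h1 h2 =>
  h.memA le_rfl h1 (by rw [h.hbtop]; exact h2)

theorem secA : ∀ v, b 2 ≤ v → v ≤ b 3 → ∃ i, i ≤ k ∧ a i = v := fun v h1 h2 =>
  h.memA (j := 1) (show 1 ≤ r by have := h.hr; omega) (by simpa using h1) (by simpa using h2)

theorem h1br : 1 ≤ b (2*r) := by
  have := h.hb4le; have := h.hb34; have := h.hb23; have := h.hb2; omega

theorem hrepb2 : ∀ c, Rep k a c (c * b 2) := by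
  intro c
  have := h.rep_smul (show 1 ≤ k by have := h.hk; omega) c
  rwa [h.ha1] at this

theorem piece_cover {t C s : ℕ}
    (ht1 : b 2 ≤ t * (a k - b (2*r)) + 1)
    (ht2 : lamMax k a + 1 ≤ C * b 2 + t * (a k - b (2*r)))
    (hbud : t + C ≤ Mx k r a b + 1)
    (hs1 : t * b (2*r) ≤ s)
    (hs2 : s ≤ (t+1) * a k + C * b 2) : Rep k a (Mx k r a b + 2) s := by
  have hb2 := h.hb2
  have hqd := h.hqd
  have e1 : t * a k = t * b (2*r) + t * (a k - b (2*r)) := by rw [← Nat.mul_add, hqd]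
  have e2 : (t+1) * a k = t * a k + a k := by ring
  obtain ⟨i, z, hik, hz1, hz2, hsz⟩ := h.exists_decompA (s := s)
    (x := t * b (2*r)) (y := C * b 2 + t * a k) (by omega) (by omega) (by omega)
  have hcb : ∃ c z', c ≤ C ∧ t * b (2*r) ≤ z' ∧ z' ≤ t * a k ∧ z = c * b 2 + z' :=
    chain_beta (by omega) (by omega) hz1 (by omega)
  obtain ⟨c, z', hcC, hz1', hz2', hzz⟩ := hcb
  have htop : Rep k a t z' := h.rep_interval h.h1br (le_of_lt h.hb2r) h.topA t z' hz1' hz2'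
  have hall := rep_add (rep_add (h.rep_idx hik) (h.hrepb2 c)) htop
  refine rep_mono (show 1 + c + t ≤ Mx k r a b + 2 by omega) ?_
  rwa [show a i + c * b 2 + z' = s by omega] at hall

theorem ramp_cover {s : ℕ}
    (hs1 : b 4 ≤ s)
    (hs2 : s ≤ b 5 + (lamMax k a / b 2) * b 2 +
      (Mx k r a b + 1 - lamMax k a / b 2) * a k) : Rep k a (Mx k r a b + 2) s := by
  have hb2 := h.hb2
  have hb45 := h.hb45
  have hb54 : b 4 + b 2 ≤ b 5 + 1 := by have := h.hb5; omega
  have hkey1 := h.key1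
  have hcstM := h.cstar_le
  have h1b : 1 ≤ b (2*r) := h.h1br
  have hbrak : b (2*r) ≤ a k := le_of_lt h.hb2r
  set t := min (Mx k r a b - lamMax k a / b 2) ((s - b 4) / b (2*r)) with hdt
  have hdiv1 : t ≤ (s - b 4) / b (2*r) := min_le_right _ _
  have htle : t ≤ Mx k r a b - lamMax k a / b 2 := min_le_left _ _
  have hdm : (s - b 4) / b (2*r) * b (2*r) ≤ s - b 4 := Nat.div_mul_le_self _ _
  have ht_mul : t * b (2*r) ≤ s - b 4 := le_trans (Nat.mul_le_mul_right _ hdiv1) hdm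
  have hx1 : b 4 + t * b (2*r) ≤ s := by omega
  have htak : t * b (2*r) ≤ t * a k := Nat.mul_le_mul_left _ hbrak
  have hf2 : s ≤ b 5 + (lamMax k a / b 2) * b 2 + (t * a k + a k) := by
    rcases le_or_gt (Mx k r a b - lamMax k a / b 2) ((s - b 4) / b (2*r)) with hm | hm
    · have ht : t = Mx k r a b - lamMax k a / b 2 := min_eq_left hm
      have e0 : t + 1 = Mx k r a b + 1 - lamMax k a / b 2 := by omega
      have e : (t + 1) * a k = (Mx k r a b + 1 - lamMax k a / b 2) * a k := by rw [e0]
      have e2 : (t+1) * a k = t * a k + a k := by ring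
      omega
    · have ht : t = (s - b 4) / b (2*r) := min_eq_right (le_of_lt hm)
      have hlt : s - b 4 < (t + 1) * b (2*r) := by
        rw [ht]
        have f1 := Nat.div_add_mod (s - b 4) (b (2*r))
        have f2 := Nat.mod_lt (s - b 4) (show 0 < b (2*r) by omega)
        have f3 : ((s - b 4)/ b (2*r) + 1) * b (2*r) =
            b (2*r) * ((s - b 4)/b (2*r)) + b (2*r) := by ring
        omega
      have e2 : (t+1) * b (2*r) ≤ (t+1) * a k := Nat.mul_le_mul_left _ hbrak
      have e3 : (t+1) * a k = t * a k + a k := by ring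
      omega
  obtain ⟨i, z, hik, hz1, hz2, hsz⟩ := h.exists_decompA (s := s)
    (x := b 4 + t * b (2*r)) (y := b 5 + (lamMax k a / b 2) * b 2 + t * a k)
    (by omega) hx1 (by omega)
  have hcb : ∃ c z2, c ≤ lamMax k a / b 2 ∧ b 4 + t * b (2*r) ≤ z2 ∧ z2 ≤ b 5 + t * a k ∧
      z = c * b 2 + z2 := chain_beta (by omega) (by omega) hz1 (by omega)
  obtain ⟨c, z2, hcC, hz1', hz2', hzz⟩ := hcb
  obtain ⟨u, v, hu1, hu2, hv1, hv2, huv⟩ := split_two (z := z2) (x1 := b 4) (y1 := b 5)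
    (x2 := t * b (2*r)) (y2 := t * a k) hb45 htak (by omega) (by omega)
  obtain ⟨iu, hiu, haiu⟩ := h.memA (j := 2) (v := u) h.hr (by simpa using hu1) (by simpa using hu2)
  have hvrep : Rep k a t v := h.rep_interval h1b hbrak h.topA t v hv1 hv2
  have hall := rep_add (rep_add (rep_add (h.rep_idx hik) (h.rep_idx hiu)) (h.hrepb2 c)) hvrep
  refine rep_mono (show 1 + 1 + c + t ≤ Mx k r a b + 2 by omega) ?_
  rwa [show a i + a iu + c * b 2 + v = s by omega] at hall

theorem cover_base {s : ℕ} (h1 : (Mx k r a b + 2) * b 2 ≤ s) (h2 : s ≤ (Mx k r a b + 2) * a k) :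
    Rep k a (Mx k r a b + 2) s := by
  have hb2 := h.hb2
  have hb23 := h.hb23
  by_cases hbot : s ≤ (Mx k r a b + 2) * b 3
  · exact h.rep_interval (show 1 ≤ b 2 by omega) hb23 h.secA (Mx k r a b + 2) s h1 hbot
  push_neg at hbot
  have hb4le : b 4 ≤ (Mx k r a b + 2) * b 3 := by
    have hhole2 := h.hole2
    have e1 : (Mx k r a b + 2) * b 3 = b 3 + (Mx k r a b + 1) * b 3 := by ring
    have e2 : (Mx k r a b + 1) * b 2 ≤ (Mx k r a b + 1) * b 3 := Nat.mul_le_mul_left _ hb23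
    have e3 : (lamMax k a / b 2) * b 2 + b 2 ≤ (Mx k r a b + 1) * b 2 := by
      have h6 : lamMax k a / b 2 + 1 ≤ Mx k r a b + 1 := by have := h.cstar_le; omega
      calc (lamMax k a / b 2) * b 2 + b 2 = (lamMax k a / b 2 + 1) * b 2 := by ring
        _ ≤ (Mx k r a b + 1) * b 2 := Nat.mul_le_mul_right _ h6
    have hkey1 := h.key1
    omega
  by_cases hramp : s ≤ b 5 + (lamMax k a / b 2) * b 2 + (Mx k r a b + 1 - lamMax k a / b 2) * a k
  · exact h.ramp_cover (by omega) hramp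
  push_neg at hramp
  have hq1 := h.hq1
  obtain ⟨hT0f1, hT0f2⟩ := h.T0fact
  have h1b : 1 ≤ b (2*r) := h.h1br
  have hTle : Mx k r a b + 1 - lamMax k a / b 2 ≤ Mx k r a b + 1 := Nat.sub_le _ _
  have hT0ak : (Mx k r a b + 1 - lamMax k a / b 2) * a k < s := by omega
  have hT0br : (Mx k r a b + 1 - lamMax k a / b 2) * b (2*r) ≤
      (Mx k r a b + 1 - lamMax k a / b 2) * a k := Nat.mul_le_mul_left _ (le_of_lt h.hb2r)
  have htlow : Mx k r a b + 1 - lamMax k a / b 2 ≤ s / b (2*r) :=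
    (Nat.le_div_iff_mul_le (by omega)).2 (by omega)
  set t := min (Mx k r a b + 1) (s / b (2*r)) with hdt
  have ht1 : Mx k r a b + 1 - lamMax k a / b 2 ≤ t := le_min hTle htlow
  have ht2 : t ≤ Mx k r a b + 1 := min_le_left _ _
  have hconstraint := h.interp ht1 ht2
  have hw1 : t * b (2*r) ≤ s := by
    have p1 : t ≤ s / b (2*r) := min_le_right _ _
    have p2 := Nat.div_mul_le_self s (b (2*r))
    have p3 := Nat.mul_le_mul_right (b (2*r)) p1
    omega
  have hw2 : s ≤ (t+1) * a k + (Mx k r a b + 1 - t) * b 2 := by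
    rcases le_or_gt (Mx k r a b + 1) (s / b (2*r)) with hm | hm
    · have hteq : t = Mx k r a b + 1 := min_eq_left hm
      rw [hteq]
      have e : (Mx k r a b + 1 + 1) * a k = (Mx k r a b + 2) * a k := by ring
      omega
    · have hteq : t = s / b (2*r) := min_eq_right (le_of_lt hm)
      have f1 := Nat.div_add_mod s (b (2*r))
      have f2 := Nat.mod_lt s (show 0 < b (2*r) by omega)
      have hlt : s < (t+1) * b (2*r) := by
        rw [hteq]
        have f3 : (s / b (2*r) + 1) * b (2*r) = b (2*r) * (s / b (2*r)) + b (2*r) := by ring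
        omega
      have f4 : (t+1) * b (2*r) ≤ (t+1) * a k := Nat.mul_le_mul_left _ (le_of_lt h.hb2r)
      omega
  have hmq : (Mx k r a b + 1 - lamMax k a / b 2) * (a k - b (2*r)) ≤ t * (a k - b (2*r)) :=
    Nat.mul_le_mul_right _ ht1
  exact h.piece_cover (t := t) (C := Mx k r a b + 1 - t)
    (by omega) hconstraint (by omega) hw1 hw2

theorem cover {n : ℕ} (hn : Mx k r a b + 2 ≤ n) :
    ∀ s, n * b 2 ≤ s → s ≤ n * a k → Rep k a n s := by
  induction n, hn using Nat.le_induction with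
  | base => exact fun s h1 h2 => h.cover_base h1 h2
  | succ n hn ih =>
      intro s h1 h2
      have hb2 := h.hb2
      have hak : b 2 ≤ a k := by
        have := h.ha1 ▸ h.ale (show 1 ≤ k by have := h.hk; omega) le_rfl
        omega
      have e1 : (n+1) * b 2 = n * b 2 + b 2 := by ring
      have e2 : (n+1) * a k = n * a k + a k := by ring
      have e3 : n * b 2 ≤ n * a k := Nat.mul_le_mul_left _ hak
      have hrep1 : Rep k a 1 (b 2) := by
        have := h.rep_idx (show 1 ≤ k by have := h.hk; omega)
        rwa [h.ha1] at this
      by_cases hc : s ≤ n * a k + b 2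
      · have hup : Rep k a n (s - b 2) := ih (s - b 2) (by omega) (by omega)
        have := rep_add hup hrep1
        rwa [show s - b 2 + b 2 = s by omega] at this
      · push_neg at hc
        have h9 : n * b 2 + (a k - b 2) ≤ n * a k := by
          have p1 : 1 * (a k - b 2) ≤ n * (a k - b 2) := Nat.mul_le_mul_right _ (by omega)
          have p2 : n * b 2 + n * (a k - b 2) = n * a k := by
            rw [← Nat.mul_add]
            congr 1
            omega
          omega
        have hup : Rep k a n (s - a k) := ih (s - a k) (by omega) (by omega)
        have := rep_add hup (h.rep_idx (le_refl k))
        rwa [show s - a k + a k = s by omega] at this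

theorem key0 : (Mx k r a b + 2) * b 2 ≤ (Mx k r a b + 1) * a k + 1 := by
  have hb2 := h.hb2
  have h4 : b 2 + 2 ≤ b 4 := by have := h.hb34; have := h.hb23; omega
  have h5 : b 4 ≤ b (2*r) := h.hb4le
  have hqd := h.hqd
  have hak : b 2 + 2 + (a k - b (2*r)) ≤ a k := by omega
  have e1 : (Mx k r a b + 2) * b 2 = (Mx k r a b + 1) * b 2 + b 2 := by ring
  have e2 : (Mx k r a b + 1) * (b 2 + ((a k - b (2*r)) + 2)) ≤ (Mx k r a b + 1) * a k :=
    Nat.mul_le_mul_left _ (by omega)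
  have e3 : (Mx k r a b + 1) * (b 2 + ((a k - b (2*r)) + 2)) =
      (Mx k r a b + 1) * b 2 + (Mx k r a b + 1) * ((a k - b (2*r)) + 2) := by ring
  have e4 : b 2 ≤ (Mx k r a b + 1) * ((a k - b (2*r)) + 2) + 1 := by
    rcases le_or_gt (b 2) ((a k - b (2*r)) + 1) with hc | hc
    · have p1 : 1 * ((a k - b (2*r)) + 2) ≤ (Mx k r a b + 1) * ((a k - b (2*r)) + 2) :=
        Nat.mul_le_mul_right _ (by omega)
      omega
    · have hL1 := h.hL1
      have hd1 : (b 2 - 1) / (a k - b (2*r)) ≤ lamMax k a / (a k - b (2*r)) :=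
        Nat.div_le_div_right (by omega)
      have hd2 : (b 2 - 1) / (a k - b (2*r)) + 1 ≤ Mx k r a b + 1 := by
        have := h.Lqle; omega
      have hq1 := h.hq1
      have f1 := Nat.div_add_mod (b 2 - 1) (a k - b (2*r))
      have f2 := Nat.mod_lt (b 2 - 1) (show 0 < a k - b (2*r) by omega)
      have f3 : ((b 2 - 1) / (a k - b (2*r)) + 1) * ((a k - b (2*r)) + 2) =
          (a k - b (2*r)) * ((b 2 - 1) / (a k - b (2*r))) + (a k - b (2*r)) +
          2 * ((b 2 - 1) / (a k - b (2*r))) + 2 := by ring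
      have f5 : ((b 2 - 1) / (a k - b (2*r)) + 1) * ((a k - b (2*r)) + 2) ≤
          (Mx k r a b + 1) * ((a k - b (2*r)) + 2) := Nat.mul_le_mul_right _ hd2
      omega
  omega

theorem claim1 {x : ℕ} (hx : (Mx k r a b + 1) * a k < x) : x ∈ S1 k a := by
  have hd := h.dpos
  have f1 := Nat.div_add_mod (x - ((Mx k r a b + 1) * a k + 1)) (a k)
  have f2 := Nat.mod_lt (x - ((Mx k r a b + 1) * a k + 1)) hd
  have hkey0 := h.key0
  have hs1 : (Mx k r a b + 2) * b 2 ≤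
      (Mx k r a b + 1) * a k + 1 + (x - ((Mx k r a b + 1) * a k + 1)) % a k := by omega
  have hs2 : (Mx k r a b + 1) * a k + 1 + (x - ((Mx k r a b + 1) * a k + 1)) % a k ≤
      (Mx k r a b + 2) * a k := by
    have e : (Mx k r a b + 2) * a k = (Mx k r a b + 1) * a k + a k := by ring
    omega
  have hrep := h.cover (n := Mx k r a b + 2) le_rfl _ hs1 hs2
  have hjrep : Rep k a ((x - ((Mx k r a b + 1) * a k + 1)) / a k)
      (((x - ((Mx k r a b + 1) * a k + 1)) / a k) * a k) := h.rep_smul le_rfl _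
  have hadd := rep_add hrep hjrep
  apply rep_S1 (m := Mx k r a b + 2 + (x - ((Mx k r a b + 1) * a k + 1)) / a k)
  have e5 : ((x - ((Mx k r a b + 1) * a k + 1)) / a k) * a k =
      a k * ((x - ((Mx k r a b + 1) * a k + 1)) / a k) := Nat.mul_comm _ _
  rwa [show (Mx k r a b + 1) * a k + 1 + (x - ((Mx k r a b + 1) * a k + 1)) % a k +
      ((x - ((Mx k r a b + 1) * a k + 1)) / a k) * a k = x by omega] at hadd

theorem S2univ : ∀ n : ℕ, n ∈ S2 k a := by
  intro n
  have hd := h.dpos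
  obtain ⟨j0, hj0k, hj0⟩ := h.topA (a k - 1) (by have := h.hb2r; omega) (by omega)
  have hj0k' : j0 < k := by
    rcases Nat.lt_or_ge j0 k with h' | h'
    · exact h'
    · exfalso
      have : j0 = k := by omega
      rw [this] at hj0
      omega
  refine ⟨fun i => if i = j0 then n else 0, ?_⟩
  simp only [ite_mul, zero_mul]
  rw [Finset.sum_ite_eq' (Finset.range k) j0 (fun i => n * (a k - a i)),
    if_pos (Finset.mem_range.2 hj0k')]
  have e1 : a k - a j0 = 1 := by omega
  rw [e1, Nat.mul_one]

theorem sum_split (f : ℕ → ℕ) :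
    ∑ i ∈ Finset.range (k+1), f i = f 0 + ∑ i ∈ Finset.Icc 1 k, f i := by
  have e : Finset.range (k+1) = insert 0 (Finset.Icc 1 k) := by
    ext i
    simp only [Finset.mem_range, Finset.mem_insert, Finset.mem_Icc]
    omega
  rw [e, Finset.sum_insert (by simp)]

theorem sum_compl (x : ℕ → ℕ) :
    ∑ i ∈ Finset.range (k+1), x i * (a k - a i) + ∑ i ∈ Finset.range (k+1), x i * a i =
    (∑ i ∈ Finset.range (k+1), x i) * a k := by
  rw [← Finset.sum_add_distrib, Finset.sum_mul]
  refine Finset.sum_congr rfl (fun i hi => ?_)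
  have hik : i ≤ k := by
    have := Finset.mem_range.1 hi
    omega
  have hle : a i ≤ a k := h.ale hik le_rfl
  rw [← Nat.mul_add, Nat.sub_add_cancel hle]

theorem S'bound {u : ℕ × ℕ} (hu : u ∈ S' k a \ S k a) : deg k a u ≤ Mx k r a b + 1 := by
  obtain ⟨huS', hnotS⟩ := hu
  obtain ⟨p, hp0, -⟩ := huS'
  obtain ⟨x, hx⟩ := hp0
  have hd := h.dpos
  have h1 : u.1 = ∑ i ∈ Finset.range (k+1), x i * a i := by
    have h1 := congrArg Prod.fst hx
    simp only [Prod.fst_add, Prod.smul_fst, Prod.fst_sum, smul_eq_mul, e] at h1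
    simpa using h1
  have h2 : u.2 + p * a k = ∑ i ∈ Finset.range (k+1), x i * (a k - a i) := by
    have h2 := congrArg Prod.snd hx
    simp only [Prod.snd_add, Prod.smul_snd, Prod.snd_sum, smul_eq_mul, e] at h2
    simpa using h2
  have hsum := h.sum_compl x
  set m := ∑ i ∈ Finset.range (k+1), x i with hm
  have hkey : u.1 + u.2 + p * a k = m * a k := by omega
  have hpm : p ≤ m := by
    by_contra hpm
    push_neg at hpm
    have e1 : (m+1) * a k ≤ p * a k := Nat.mul_le_mul_right _ hpm
    have e2 : (m+1) * a k = m * a k + a k := by ring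
    omega
  have hn : u.1 + u.2 = (m - p) * a k := by
    have e1 : (m - p) * a k + p * a k = m * a k := by
      rw [← Nat.add_mul]
      congr 1
      omega
    omega
  have hdeg : deg k a u = m - p := by
    show (u.1 + u.2) / a k = m - p
    rw [hn, Nat.mul_div_cancel _ hd]
  rw [hdeg]
  by_contra hcon
  push_neg at hcon
  have hu1S : u.1 ∈ S1 k a := by
    refine ⟨x, ?_⟩
    calc u.1 = ∑ i ∈ Finset.range (k+1), x i * a i := h1
      _ = x 0 * a 0 + ∑ i ∈ Finset.Icc 1 k, x i * a i := h.sum_split _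
      _ = ∑ i ∈ Finset.Icc 1 k, x i * a i := by rw [h.ha0, Nat.mul_zero, Nat.zero_add]
  have hu1le : u.1 ≤ (m - p) * a k := by omega
  have hrepn : Rep k a (m - p) u.1 := by
    rcases Nat.lt_or_ge u.1 ((m - p) * b 2) with hlt | hge
    · obtain ⟨m', hrep', hm'⟩ := h.count_le hu1S
      rw [h.ha1] at hm'
      have hm'lt : m' < m - p := by
        by_contra hcon2
        push_neg at hcon2
        have : (m - p) * b 2 ≤ m' * b 2 := Nat.mul_le_mul_right _ hcon2
        omega
      exact rep_mono (by omega) hrep'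
    · exact h.cover (by omega) u.1 hge hu1le
  obtain ⟨x', hx'1, hx'2⟩ := hrepn
  apply hnotS
  set mm := ∑ i ∈ Finset.Icc 1 k, x' i with hmm
  refine ⟨fun i => if i = 0 then (m - p) - mm else x' i, ?_⟩
  set X := fun i => if i = 0 then (m - p) - mm else x' i with hX
  have hXIcc : ∀ g : ℕ → ℕ, ∑ i ∈ Finset.Icc 1 k, X i * g i =
      ∑ i ∈ Finset.Icc 1 k, x' i * g i := by
    intro g
    refine Finset.sum_congr rfl (fun i hi => ?_)
    have hi0 : i ≠ 0 := by
      have := (Finset.mem_Icc.1 hi).1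
      omega
    simp [hX, hi0]
  have hX0 : X 0 = (m - p) - mm := by simp [hX]
  have hfst : (∑ i ∈ Finset.range (k+1), X i • e k a (a i)).1 =
      ∑ i ∈ Finset.range (k+1), X i * a i := by
    rw [Prod.fst_sum]
    refine Finset.sum_congr rfl (fun i hi => ?_)
    simp [e, smul_eq_mul]
  have hsnd : (∑ i ∈ Finset.range (k+1), X i • e k a (a i)).2 =
      ∑ i ∈ Finset.range (k+1), X i * (a k - a i) := by
    rw [Prod.snd_sum]
    refine Finset.sum_congr rfl (fun i hi => ?_)
    simp [e, smul_eq_mul]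
  have hXa : ∑ i ∈ Finset.range (k+1), X i * a i = u.1 := by
    calc ∑ i ∈ Finset.range (k+1), X i * a i
        = X 0 * a 0 + ∑ i ∈ Finset.Icc 1 k, X i * a i := h.sum_split _
      _ = ∑ i ∈ Finset.Icc 1 k, x' i * a i := by
          rw [h.ha0, Nat.mul_zero, Nat.zero_add, hXIcc (fun i => a i)]
      _ = u.1 := hx'1.symm
  have hXsum : ∑ i ∈ Finset.range (k+1), X i = m - p := by
    calc ∑ i ∈ Finset.range (k+1), X i
        = X 0 + ∑ i ∈ Finset.Icc 1 k, X i := h.sum_split _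
      _ = ((m - p) - mm) + ∑ i ∈ Finset.Icc 1 k, x' i := by
          rw [hX0]
          congr 1
          refine Finset.sum_congr rfl (fun i hi => ?_)
          have hi0 : i ≠ 0 := by
            have := (Finset.mem_Icc.1 hi).1
            omega
          simp [hX, hi0]
      _ = m - p := by rw [← hmm]; omega
  have hcompl := h.sum_compl X
  rw [hXa, hXsum] at hcompl
  have hXb : ∑ i ∈ Finset.range (k+1), X i * (a k - a i) = u.2 := by omega
  have : (∑ i ∈ Finset.range (k+1), X i • e k a (a i)) = u := by
    refine Prod.ext_iff.2 ⟨?_, ?_⟩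
    · rw [hfst, hXa]
    · rw [hsnd, hXb]
  exact this.symm

theorem Tbound {u : ℤ × ℤ} (hu : u ∈ T k a) : degZ k a u ≤ (Mx k r a b : ℤ) := by
  obtain ⟨hdvd, hu1, hu2⟩ := hu
  have hd := h.dpos
  have hdz : (0:ℤ) < (a k : ℤ) := by exact_mod_cast hd
  have hu2neg : u.2 ≤ -1 := by
    by_contra hcon
    push_neg at hcon
    have h0 : 0 ≤ u.2 := by omega
    have hcontra := hu2 u.2.toNat (h.S2univ u.2.toNat)
    rw [Int.toNat_of_nonneg h0] at hcontra
    exact hcontra rfl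
  have hu1le : u.1 ≤ (((Mx k r a b + 1) * a k : ℕ) : ℤ) := by
    by_contra hcon
    push_neg at hcon
    have h0 : 0 ≤ u.1 := le_trans (by positivity) (le_of_lt hcon)
    have hgt : ((Mx k r a b + 1) * a k : ℕ) < u.1.toNat := by omega
    have hcontra := hu1 u.1.toNat (h.claim1 hgt)
    rw [Int.toNat_of_nonneg h0] at hcontra
    exact hcontra rfl
  have heq : degZ k a u * (a k : ℤ) = u.1 + u.2 := Int.ediv_mul_cancel hdvd
  have hcast : (((Mx k r a b + 1) * a k : ℕ) : ℤ) = ((Mx k r a b + 1 : ℕ) : ℤ) * (a k : ℤ) := by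
    push_cast
    ring
  have h5 : degZ k a u * (a k : ℤ) < ((Mx k r a b + 1 : ℕ) : ℤ) * (a k : ℤ) := by omega
  have h6 : degZ k a u < ((Mx k r a b + 1 : ℕ) : ℤ) := lt_of_mul_lt_mul_right h5 (le_of_lt hdz)
  push_cast at h6
  omega

end Hyp

end Proof

theorem statement_16 (k : ℕ) (a : ℕ → ℕ) (hk : 3 ≤ k) (ha0 : a 0 = 0)
    (hmono : ∀ i, i < k → a i < a (i+1)) (hgcd : (Finset.Icc 1 k).gcd a = 1)
    (r : ℕ) (b : ℕ → ℕ) (hr : 2 ≤ r) (hb0 : b 0 = 0) (hbtop : b (2*r+1) = a k)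
    (hble : ∀ j ≤ r, b (2*j) ≤ b (2*j+1))
    (hblt : ∀ j, j < r → b (2*j+1) < b (2*j+2))
    (hgap2 : ∀ j, 1 ≤ j → j ≤ r → b (2*j-1) + 2 ≤ b (2*j))
    (hdecomp : A1set k a = ⋃ j ∈ Set.Iic r, Set.Icc (b (2*j)) (b (2*j+1)))
    (hb1 : b 1 = 0) (hb2r : b (2*r) < a k) (hb5 : b 2 ≤ b 5 - b 4 + 1) :
    reg k a ≤ 2 +
      ((max (lamSl k a / (a k - b (2*r)) + lamMax k a / b 2)
           (lamMax k a / (a k - b (2*r)) + lamSl k a / b 2) : ℕ) : ℤ) := by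
  have h : Hyp k r a b :=
    ⟨hk, ha0, hmono, hr, hb0, hbtop, hble, hblt, hgap2, hdecomp, hb1, hb2r, hb5⟩
  have hgoal : reg k a ≤ 2 + ((Mx k r a b : ℕ) : ℤ) := by
    have hbound : ∀ z ∈ ({z : ℤ | ∃ u ∈ S' k a \ S k a, z = (deg k a u : ℤ) + 1} ∪
        {z : ℤ | ∃ u ∈ T k a, z = degZ k a u + 2}), z ≤ 2 + ((Mx k r a b : ℕ) : ℤ) := by
      rintro z (⟨u, hu, rfl⟩ | ⟨u, hu, rfl⟩)
      · have hb := h.S'bound hu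
        have : (deg k a u : ℤ) ≤ (Mx k r a b : ℤ) + 1 := by exact_mod_cast hb
        omega
      · have hb := h.Tbound hu
        omega
    rcases Set.eq_empty_or_nonempty ({z : ℤ | ∃ u ∈ S' k a \ S k a, z = (deg k a u : ℤ) + 1} ∪
        {z : ℤ | ∃ u ∈ T k a, z = degZ k a u + 2}) with he | hne
    · rw [reg, he, Int.csSup_empty]
      positivity
    · rw [reg]
      exact csSup_le hne hbound
  exact hgoal


end ProjMonomialCurve
end

section
/- Let k ≥ 2 and let 0 < α₁ < α₂ < ⋯ < α_k be integers with gcd(α₁,…,α_k) = 1, and assume that αᵢ ≢ αⱼ (mod α₁) for all 1 ≤ i < j ≤ k. Then for every 1 ≤ i ≤ α_k − 1, δ(ω(i)) ≤ 1 + ⌊(2·α_k·⌊α₁/k⌋ + λ_max)/α₁⌋, and this quantity is at most 1 + 2α_k/k + λ_max/α₁ (as rational numbers). -/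
/-!
Work in `ZMod α₁`, where `α₁, …, α_k` give `k` distinct residues forming a set `G ∋ 0` that
generates the group. A Dyson e-transform argument shows `|Y + G + G| ≥ min(α₁, |Y| + |G|)`, so
`(2q - 1) • G` has at least `min(α₁, qk)` elements for `q = ⌊α₁/k⌋`, and pigeonhole against
`c - G` gives `2q • G = ZMod α₁`. Lifting, every `n ≥ 2qα_k` is a sum of generators: `2q` of
them, of total at most `2qα_k`, in the right class, plus copies of `α₁`. Any representation of
`n` has at most `n / α₁` summands. As `ω(i) ≤ 2qα_k + i`, either `ω(i) ≤ 2qα_k + λ_max`, or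
removing a generator `α_j` with `α_j ≤ ω(i) - 2qα_k ≤ α_j + λ_max` lands in
`[2qα_k, 2qα_k + λ_max]` at the cost of one summand.
-/

open Finset Pointwise

section Sumset

variable {M : Type*} [AddCommGroup M] [DecidableEq M]

theorem Finset.exists_addDysonETransform_stable (A B : Finset M) (hB : (0 : M) ∈ B) :
    ∃ A' B' : Finset M, A' + B' ⊆ A + B ∧ #A' + #B' = #A + #B ∧ A ⊆ A' ∧ (0 : M) ∈ B' ∧
      A' + B' ⊆ A' := by
  induction B using Finset.strongInduction generalizing A with
  | H B ih =>
  by_cases hstable : A + B ⊆ A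
  · exact ⟨A, B, subset_rfl, rfl, subset_rfl, hB, hstable⟩
  obtain ⟨a, ha, b, hb, hab⟩ : ∃ a ∈ A, ∃ b ∈ B, a + b ∉ A := by
    simpa [subset_iff, mem_add] using hstable
  set x := addDysonETransform a (A, B)
  have hx0 : (0 : M) ∈ x.2 := by simp [x, hB, mem_neg_vadd_finset_iff, ha]
  have hxB : x.2 ⊂ B := ⟨inter_subset_left, fun h => by
    simpa [mem_neg_vadd_finset_iff, hab] using inter_subset_right (h hb)⟩
  obtain ⟨A', B', hsub, hcard, hAA', hB', hstab⟩ := ih _ hxB x.1 hx0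
  exact ⟨A', B', hsub.trans (addDysonETransform.subset a (A, B)),
    hcard.trans (addDysonETransform.card a (A, B)), subset_union_left.trans hAA', hB', hstab⟩

theorem Finset.vadd_finset_eq_of_add_subset {A B : Finset M} (h : A + B ⊆ A) {b : M}
    (hb : b ∈ B) : b +ᵥ A = A :=
  eq_of_subset_of_card_le
    (fun _ hx => by
      obtain ⟨a, ha, rfl⟩ := mem_vadd_finset.1 hx
      simpa [add_comm] using h (add_mem_add ha hb))
    (card_vadd_finset b A).ge

theorem Finset.card_add_card_le_card_add {X B G : Finset M} (hB : ∀ b ∈ B, b +ᵥ X = X)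
    (hG : (0 : M) ∈ G) (hXG : ¬ X + G ⊆ X) : #X + #B ≤ #(X + G) := by
  obtain ⟨x, hx, g, hg, hxg⟩ : ∃ x ∈ X, ∃ g ∈ G, x + g ∉ X := by
    simpa [subset_iff, mem_add] using hXG
  have hcoset : (x + g) +ᵥ B ⊆ X + G := fun _ hy => by
    obtain ⟨b, hb, rfl⟩ := mem_vadd_finset.1 hy
    have : b + x ∈ X := hB b hb ▸ vadd_mem_vadd_finset hx
    simpa [add_right_comm, add_comm b] using add_mem_add this hg
  -- `b +ᵥ X = X` lets us cancel `b`, so the whole coset `(x + g) +ᵥ B` misses `X`.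
  have hdisj : Disjoint X ((x + g) +ᵥ B) := disjoint_right.2 fun y hy hyX => by
    obtain ⟨b, hb, rfl⟩ := mem_vadd_finset.1 hy
    rw [← hB b hb] at hyX
    obtain ⟨z, hz, hzb⟩ := mem_vadd_finset.1 hyX
    exact hxg (by rwa [vadd_eq_add, vadd_eq_add, add_comm b, add_left_inj] at hzb ▸ hz)
  calc #X + #B = #(X ∪ ((x + g) +ᵥ B)) := by rw [card_union_of_disjoint hdisj, card_vadd_finset]
    _ ≤ #(X + G) := card_le_card (union_subset (subset_add_left X hG) hcoset)

theorem Finset.eq_univ_of_add_subset [Fintype M] {A G : Finset M} (hA : A.Nonempty)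
    (hG : AddSubgroup.closure (G : Set M) = ⊤) (h : A + G ⊆ A) : A = univ := by
  have hstab : AddAction.stabilizer M A = ⊤ := top_le_iff.1 <| hG ▸
    (AddSubgroup.closure_le _).2 fun _ hg => vadd_finset_eq_of_add_subset h hg
  obtain ⟨a, ha⟩ := hA
  refine eq_univ_of_forall fun y => ?_
  have hy : (y - a) +ᵥ A = A := AddAction.mem_stabilizer_iff.1 (hstab ▸ AddSubgroup.mem_top _)
  have := vadd_mem_vadd_finset (a := y - a) ha
  rwa [hy, vadd_eq_add, sub_add_cancel] at this

variable [Fintype M]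

theorem Finset.min_card_le_card_add_add {Y G : Finset M} (hY : Y.Nonempty) (hG0 : (0 : M) ∈ G)
    (hG : AddSubgroup.closure (G : Set M) = ⊤) :
    min (Fintype.card M) (#Y + #G) ≤ #(Y + G + G) := by
  obtain ⟨A, B, hsub, hcard, hYA, hB0, hstab⟩ := exists_addDysonETransform_stable Y G hG0
  have hAG : #(A + G) ≤ #(Y + G + G) :=
    card_le_card (add_subset_add_right ((subset_add_left A hB0).trans hsub))
  by_cases hA : A + G ⊆ A
  · have hcard : Fintype.card M ≤ #(A + G) := by
      rw [← card_univ, ← eq_univ_of_add_subset (hY.mono hYA) hG hA]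
      exact card_le_card (subset_add_left A hG0)
    omega
  · have := card_add_card_le_card_add (fun _ hb => vadd_finset_eq_of_add_subset hstab hb) hG0 hA
    omega

theorem Finset.min_card_le_card_nsmul {G : Finset M} (hG0 : (0 : M) ∈ G)
    (hG : AddSubgroup.closure (G : Set M) = ⊤) (s : ℕ) :
    min (Fintype.card M) ((s + 1) * #G) ≤ #((2 * s + 1) • G) := by
  induction s with
  | zero => simp
  | succ s ih =>
    have := min_card_le_card_add_add ⟨0, zero_mem_nsmul (n := 2 * s + 1) hG0⟩ hG0 hG
    rw [show 2 * (s + 1) + 1 = 2 * s + 1 + 1 + 1 by ring, succ_nsmul, succ_nsmul]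
    refine le_trans ?_ this
    rw [add_mul]
    omega

theorem Finset.mem_add_of_card_lt_card_add_card {X G : Finset M}
    (h : Fintype.card M < #X + #G) (c : M) : c ∈ X + G := by
  have hZ : #(G.image (c - ·)) = #G := card_image_of_injective _ sub_right_injective
  obtain ⟨y, hy⟩ := inter_nonempty_of_card_lt_card_add_card (subset_univ X)
    (subset_univ (G.image (c - ·))) (by rwa [card_univ, hZ])
  obtain ⟨hyX, hyZ⟩ := mem_inter.1 hy
  obtain ⟨g, hg, rfl⟩ := mem_image.1 hyZ
  simpa using add_mem_add hyX hg

theorem Finset.mem_nsmul_of_closure_eq_top {G : Finset M} (hG0 : (0 : M) ∈ G)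
    (hG : AddSubgroup.closure (G : Set M) = ⊤) (c : M) :
    c ∈ (2 * (Fintype.card M / #G)) • G := by
  have hGpos : 0 < #G := card_pos.2 ⟨0, hG0⟩
  have hq : 0 < Fintype.card M / #G := Nat.div_pos (card_le_univ G) hGpos
  obtain ⟨s, hs⟩ : ∃ s, Fintype.card M / #G = s + 1 := ⟨_, (Nat.succ_pred_eq_of_pos hq).symm⟩
  have hX := min_card_le_card_nsmul hG0 hG s
  have hlt := Nat.lt_div_mul_add (a := Fintype.card M) hGpos
  rw [hs] at hlt ⊢
  rw [show 2 * (s + 1) = 2 * s + 1 + 1 by ring, succ_nsmul]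
  exact mem_add_of_card_lt_card_add_card (by omega) c

end Sumset

theorem AddSubgroup.natCast_finsetGcd_mem {R ι : Type*} [Ring R] (H : AddSubgroup R)
    {s : Finset ι} {f : ι → ℕ} (h : ∀ i ∈ s, (f i : R) ∈ H) : ((s.gcd f : ℕ) : R) ∈ H := by
  classical
  induction s using Finset.induction with
  | empty => simp
  | insert a s ha ih =>
    rw [gcd_insert, gcd_eq_nat_gcd]
    have hbezout : ((Nat.gcd (f a) (s.gcd f) : ℕ) : R) =
        Nat.gcdA (f a) (s.gcd f) • (f a : R) + Nat.gcdB (f a) (s.gcd f) • ((s.gcd f : ℕ) : R) := by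
      simpa [zsmul_eq_mul, mul_comm] using
        congrArg (Int.cast : ℤ → R) (Nat.gcd_eq_gcd_ab (f a) (s.gcd f))
    rw [hbezout]
    exact H.add_mem (H.zsmul_mem (h a (mem_insert_self a s)) _)
      (H.zsmul_mem (ih fun i hi => h i (mem_insert_of_mem hi)) _)

theorem ZMod.closure_natCast_image_eq_top {ι : Type*} [DecidableEq ι] {m : ℕ} {s : Finset ι}
    {f : ι → ℕ} (hs : s.gcd f = 1) :
    AddSubgroup.closure (↑(s.image fun i => (f i : ZMod m)) : Set (ZMod m)) = ⊤ := by
  have h1 := AddSubgroup.natCast_finsetGcd_mem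
    (AddSubgroup.closure (↑(s.image fun i => (f i : ZMod m)) : Set (ZMod m)))
    (s := s) (f := f) fun i hi => AddSubgroup.subset_closure (mem_coe.2 (mem_image_of_mem _ hi))
  rw [hs, Nat.cast_one] at h1
  refine eq_top_iff.2 fun x _ => ?_
  obtain ⟨z, rfl⟩ := ZMod.intCast_surjective x
  simpa only [zsmul_eq_mul, mul_one] using AddSubgroup.zsmul_mem _ h1 z

theorem Nat.cast_mul_div_add_div_le (a b c l : ℕ) :
    (((a * (b / c) + l) / b : ℕ) : ℚ) ≤ a / c + l / b := by
  have hfloor : (a : ℚ) * ((b / c : ℕ) : ℚ) / b ≤ a / c := by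
    rcases (Nat.zero_le b).eq_or_lt with rfl | hb
    · simp only [Nat.cast_zero, div_zero]
      positivity
    calc (a : ℚ) * ((b / c : ℕ) : ℚ) / b ≤ a * (b / c) / b := by gcongr; exact Nat.cast_div_le
      _ = a / c := by field_simp
  calc (((a * (b / c) + l) / b : ℕ) : ℚ) ≤ ((a * (b / c) + l : ℕ) : ℚ) / b := Nat.cast_div_le
    _ = a * ((b / c : ℕ) : ℚ) / b + l / b := by push_cast; ring
    _ ≤ a / c + l / b := by gcongr

namespace ProjMonomialCurve

variable {k : ℕ} {α : ℕ → ℕ}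

def HasRep (k : ℕ) (α : ℕ → ℕ) (n C : ℕ) : Prop :=
  ∃ x : ℕ → ℕ, n = ∑ i ∈ Icc 1 k, x i * α i ∧ C = ∑ i ∈ Icc 1 k, x i

theorem HasRep.add {n C n' C' : ℕ} (h : HasRep k α n C) (h' : HasRep k α n' C') :
    HasRep k α (n + n') (C + C') := by
  obtain ⟨x, rfl, rfl⟩ := h
  obtain ⟨y, rfl, rfl⟩ := h'
  exact ⟨x + y, by simp [add_mul, sum_add_distrib], by simp [sum_add_distrib]⟩

theorem hasRep_mul {j : ℕ} (hj : j ∈ Icc 1 k) (t : ℕ) : HasRep k α (t * α j) t :=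
  ⟨Pi.single j t, by simp [Pi.single_apply, hj], by simp [Pi.single_apply, hj]⟩

theorem mem_S1_iff {n : ℕ} : n ∈ S1 k α ↔ ∃ C, HasRep k α n C :=
  ⟨fun ⟨x, hx⟩ => ⟨_, x, hx, rfl⟩, fun ⟨_, x, hx, _⟩ => ⟨x, hx⟩⟩

theorem delta1_le {n C : ℕ} (h : HasRep k α n C) : delta1 k α n ≤ C := by
  obtain ⟨x, h1, h2⟩ := h
  exact Nat.sInf_le ⟨x, h1, h2⟩

theorem HasRep.le_div {n C a : ℕ} (h : HasRep k α n C) (ha : 0 < a)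
    (hα : ∀ i ∈ Icc 1 k, a ≤ α i) : C ≤ n / a := by
  obtain ⟨x, rfl, rfl⟩ := h
  rw [Nat.le_div_iff_mul_le ha, sum_mul]
  exact sum_le_sum fun i hi => Nat.mul_le_mul_left _ (hα i hi)

theorem monotoneOn_Icc_of_lt_add_one (hmono : ∀ i, 1 ≤ i → i < k → α i < α (i + 1)) :
    MonotoneOn α (Set.Icc 1 k) := by
  intro i hi j hj hij
  induction j, hij using Nat.le_induction with
  | base => exact le_rfl
  | succ j hij ih =>
    have hjk : j < k := hj.2
    exact (ih ⟨hi.1.trans hij, hjk.le⟩).trans (hmono j (hi.1.trans hij) hjk).le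

theorem gap_le_lamMax {i : ℕ} (hi : i ∈ Icc 1 k) : α i - α (i - 1) - 1 ≤ lamMax k α :=
  le_sup (f := fun i => α i - α (i - 1) - 1) hi

theorem exists_le_le_add_lamMax (hα0 : α 0 = 0) {v : ℕ} (hv : v ≤ α k) :
    ∃ j ≤ k, α j ≤ v ∧ v ≤ α j + lamMax k α := by
  set j := Nat.findGreatest (fun j => α j ≤ v) k
  have hjk : j ≤ k := Nat.findGreatest_le k
  refine ⟨j, hjk, Nat.findGreatest_spec (P := fun j => α j ≤ v) (Nat.zero_le k) (by simp [hα0]), ?_⟩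
  rcases hjk.eq_or_lt with hjk | hjk
  · rw [hjk]
    omega
  · have hnext : v < α (j + 1) :=
      not_le.1 (Nat.findGreatest_is_greatest (P := fun j => α j ≤ v) (Nat.lt_succ_self j) hjk)
    have := gap_le_lamMax (α := α) (mem_Icc.2 ⟨Nat.le_add_left 1 j, hjk⟩)
    simp only [Nat.add_sub_cancel] at this
    omega

theorem exists_hasRep_of_mem_nsmul {m t : ℕ} {c : ZMod m} (hle : ∀ j ∈ Icc 1 k, α j ≤ α k)
    (hc : c ∈ t • (Icc 1 k).image fun j => (α j : ZMod m)) :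
    ∃ z, HasRep k α z t ∧ z ≤ t * α k ∧ (z : ZMod m) = c := by
  induction t generalizing c with
  | zero =>
    obtain rfl : c = 0 := by simpa using hc
    exact ⟨0, ⟨0, by simp, by simp⟩, (zero_mul _).ge, Nat.cast_zero⟩
  | succ t ih =>
    rw [succ_nsmul] at hc
    obtain ⟨y, hy, _, hg, rfl⟩ := mem_add.1 hc
    obtain ⟨j, hj, rfl⟩ := mem_image.1 hg
    obtain ⟨z, hz, hzle, rfl⟩ := ih hy
    refine ⟨z + α j, by simpa using hz.add (hasRep_mul hj 1), ?_, by push_cast; rfl⟩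
    rw [add_one_mul]
    exact add_le_add hzle (hle j hj)

theorem exists_hasRep_of_le (hk : 1 ≤ k) (hpos : 0 < α 1)
    (hmono : ∀ i, 1 ≤ i → i < k → α i < α (i + 1)) (hgcd : (Icc 1 k).gcd α = 1)
    (hmod : ∀ i j, 1 ≤ i → i < j → j ≤ k → α i % α 1 ≠ α j % α 1) {n : ℕ}
    (hn : 2 * α k * (α 1 / k) ≤ n) : ∃ C, HasRep k α n C := by
  have : NeZero (α 1) := ⟨hpos.ne'⟩
  set G := (Icc 1 k).image fun j => (α j : ZMod (α 1))
  have hG0 : (0 : ZMod (α 1)) ∈ G := mem_image.2 ⟨1, mem_Icc.2 ⟨le_rfl, hk⟩, ZMod.natCast_self _⟩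
  have hinj : Set.InjOn (fun j => (α j : ZMod (α 1))) (Icc 1 k) := by
    intro i hi j hj hij
    simp only [coe_Icc, Set.mem_Icc] at hi hj
    have hij' := (ZMod.natCast_eq_natCast_iff' _ _ _).1 hij
    rcases lt_trichotomy i j with h | h | h
    · exact absurd hij' (hmod i j hi.1 h hj.2)
    · exact h
    · exact absurd hij'.symm (hmod j i hj.1 h hi.2)
  have hGcard : #G = k := by rw [card_image_of_injOn hinj, Nat.card_Icc, Nat.add_sub_cancel]
  have hle : ∀ j ∈ Icc 1 k, α j ≤ α k := fun j hj =>
    monotoneOn_Icc_of_lt_add_one hmono (mem_Icc.1 hj) ⟨hk, le_rfl⟩ (mem_Icc.1 hj).2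
  have hcover := mem_nsmul_of_closure_eq_top hG0 (ZMod.closure_natCast_image_eq_top hgcd) n
  rw [ZMod.card, hGcard] at hcover
  obtain ⟨z, hz, hzle, hzn⟩ := exists_hasRep_of_mem_nsmul hle hcover
  have hzn' : z ≤ n := by linarith
  obtain ⟨t, ht⟩ := (Nat.modEq_iff_dvd' hzn').1 ((ZMod.natCast_eq_natCast_iff _ _ _).1 hzn)
  have hnz : n = z + t * α 1 := by rw [mul_comm] at ht; omega
  exact hnz ▸ ⟨_, hz.add (hasRep_mul (mem_Icc.2 ⟨le_rfl, hk⟩) t)⟩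

theorem delta1_le_of_mem_S1_of_le (hk : 1 ≤ k) (hα0 : α 0 = 0) (hpos : 0 < α 1)
    (hmono : ∀ i, 1 ≤ i → i < k → α i < α (i + 1)) (hgcd : (Icc 1 k).gcd α = 1)
    (hmod : ∀ i j, 1 ≤ i → i < j → j ≤ k → α i % α 1 ≠ α j % α 1) {n : ℕ} (hn : n ∈ S1 k α)
    (hnk : n ≤ 2 * α k * (α 1 / k) + α k) :
    delta1 k α n ≤ 1 + (2 * α k * (α 1 / k) + lamMax k α) / α 1 := by
  set B := 2 * α k * (α 1 / k)
  have hα1 : ∀ i ∈ Icc 1 k, α 1 ≤ α i := fun i hi =>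
    monotoneOn_Icc_of_lt_add_one hmono ⟨le_rfl, hk⟩ (mem_Icc.1 hi) (mem_Icc.1 hi).1
  rcases le_or_gt n (B + lamMax k α) with hsmall | hlarge
  · obtain ⟨C, hC⟩ := mem_S1_iff.1 hn
    have := (hC.le_div hpos hα1).trans (Nat.div_le_div_right hsmall)
    have := delta1_le hC
    omega
  -- Peel off a generator `α j` lying at most `λ_max` below `n - B`.
  obtain ⟨j, hjk, hjle, hjge⟩ := exists_le_le_add_lamMax (k := k) hα0 (v := n - B) (by omega)
  have hj0 : j ≠ 0 := by
    rintro rfl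
    omega
  have hj : j ∈ Icc 1 k := mem_Icc.2 ⟨Nat.pos_of_ne_zero hj0, hjk⟩
  obtain ⟨C, hC⟩ := exists_hasRep_of_le hk hpos hmono hgcd hmod (n := n - α j) (by omega)
  have hCle := (hC.le_div hpos hα1).trans (Nat.div_le_div_right (c := α 1) (by omega :
    n - α j ≤ B + lamMax k α))
  have hrep : HasRep k α n (C + 1) := by
    simpa [Nat.sub_add_cancel (by omega : α j ≤ n)] using hC.add (hasRep_mul hj 1)
  have := delta1_le hrep
  omega

theorem omega1_mem_S1_and_le (hk : 1 ≤ k) (hpos : 0 < α 1)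
    (hmono : ∀ i, 1 ≤ i → i < k → α i < α (i + 1)) (hgcd : (Icc 1 k).gcd α = 1)
    (hmod : ∀ i j, 1 ≤ i → i < j → j ≤ k → α i % α 1 ≠ α j % α 1) (i : ℕ) :
    omega1 k α i ∈ S1 k α ∧ omega1 k α i ≤ 2 * α k * (α 1 / k) + i := by
  have hmem : 2 * α k * (α 1 / k) + i ∈ {n | n ∈ S1 k α ∧ n % α k = i % α k} :=
    ⟨mem_S1_iff.2 (exists_hasRep_of_le hk hpos hmono hgcd hmod (Nat.le_add_right _ _)),
      by rw [mul_comm 2, mul_assoc, Nat.mul_add_mod]⟩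
  exact ⟨(Nat.sInf_mem ⟨_, hmem⟩).1, Nat.sInf_le hmem⟩

theorem statement_17 (k : ℕ) (α : ℕ → ℕ) (hk : 2 ≤ k) (hα0 : α 0 = 0) (hpos : 0 < α 1)
    (hmono : ∀ i, 1 ≤ i → i < k → α i < α (i+1))
    (hgcd : (Finset.Icc 1 k).gcd α = 1)
    (hmod : ∀ i j, 1 ≤ i → i < j → j ≤ k → α i % α 1 ≠ α j % α 1) :
    ∀ i, 1 ≤ i → i ≤ α k - 1 →
      delta1 k α (omega1 k α i) ≤ 1 + (2 * α k * (α 1 / k) + lamMax k α) / α 1 ∧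
      (1 + (((2 * α k * (α 1 / k) + lamMax k α) / α 1 : ℕ) : ℚ)) ≤
        1 + 2 * (α k : ℚ) / (k : ℚ) + (lamMax k α : ℚ) / (α 1 : ℚ) := by
  intro i _ hi
  obtain ⟨hS1, hle⟩ := omega1_mem_S1_and_le (by omega) hpos hmono hgcd hmod i
  refine ⟨delta1_le_of_mem_S1_of_le (by omega) hα0 hpos hmono hgcd hmod hS1 (by omega), ?_⟩
  have := Nat.cast_mul_div_add_div_le (2 * α k) (α 1) k (lamMax k α)
  push_cast at this
  linarith

end ProjMonomialCurve
end
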